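/- arXiv:2005.01070 — 7 statements merged into one kernel-verified Lean document; each statement's English description precedes it below -/
import Mathlib

section
/- For every square matrix A of size n×n over the reals and every random vector r in R^n with finite support, the expected value of det(A - r rᵀ) equals (1 - d/dt) det(A + t·E[r rᵀ]) evaluated at t = 0. -/
open Matrix BigOperators

/-!
Let `D_A` be the differential of `det` at `A`, a linear form on matrices. For a rank-one matrix
`u wᵀ`, every term of the multilinear expansion of `det (A + u wᵀ)` containing two rows of `u wᵀ`
vanishes, since those rows are both multiples of `w`; hence `det (A - v vᵀ) = det A - D_A (v vᵀ)`.
Averaging over `v` and using linearity of `D_A` gives `det A - D_A (E[r rᵀ])`, which is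
`p(0) - p'(0)`.
-/

theorem Finset.sum_finset_eq_of_two_le_card {ι M : Type*} [Fintype ι] [DecidableEq ι]
    [AddCommMonoid M] (F : Finset ι → M) (hF : ∀ s, 2 ≤ s.card → F s = 0) :
    ∑ s, F s = F ∅ + ∑ i, F {i} := by
  have hsub : insert ∅ (univ.map ⟨singleton, singleton_injective⟩) ⊆ (univ : Finset (Finset ι)) :=
    subset_univ _
  rw [← sum_subset hsub fun s _ hs => hF s ?_, sum_insert, sum_map]
  · rfl
  · simp
  · simp only [mem_insert, mem_map, mem_univ, true_and, not_or, not_exists] at hs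
    have h0 : s.card ≠ 0 := by simpa using hs.1
    have h1 : s.card ≠ 1 := fun h => by
      obtain ⟨i, rfl⟩ := card_eq_one.mp h
      exact hs.2 i rfl
    omega

namespace AlternatingMap

variable {R M N ι : Type*} [CommRing R] [AddCommGroup M] [Module R M] [AddCommGroup N]
  [Module R N] [DecidableEq ι]

theorem map_piecewise_smul_const_eq_zero (f : M [⋀^ι]→ₗ[R] N) (m : ι → M) (u : ι → R) (w : M)
    {s : Finset ι} (hs : 2 ≤ s.card) : f (s.piecewise (fun i => u i • w) m) = 0 := by
  obtain ⟨i, hi, j, hj, hij⟩ := Finset.one_lt_card.mp hs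
  set x := s.piecewise (fun _ => w) m
  have hx : s.piecewise (fun i => u i • w) m = s.piecewise (fun i => u i • x i) x := by
    ext k
    by_cases hk : k ∈ s <;> simp [x, hk]
  rw [hx, ← coe_multilinearMap, MultilinearMap.map_piecewise_smul, coe_multilinearMap,
    f.map_eq_zero_of_eq x (by simp [x, hi, hj]) hij, smul_zero]

theorem map_add_smul_const [Fintype ι] (f : M [⋀^ι]→ₗ[R] N) (m : ι → M) (u : ι → R) (w : M) :
    f (m + fun i => u i • w) = f m + ∑ i, f (Function.update m i (u i • w)) := by
  rw [add_comm, f.map_add_univ, Finset.sum_finset_eq_of_two_le_card _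
    fun s hs => f.map_piecewise_smul_const_eq_zero m u w hs]
  simp [Finset.piecewise_singleton]

end AlternatingMap

namespace Matrix

variable {ι R : Type*} [Fintype ι] [DecidableEq ι] [CommRing R]

def detDeriv (A : Matrix ι ι R) : Matrix ι ι R →ₗ[R] R where
  toFun B := ∑ i, (A.updateRow i (B i)).det
  map_add' B C := by
    rw [← Finset.sum_add_distrib]
    exact Finset.sum_congr rfl fun i _ => det_updateRow_add A i (B i) (C i)
  map_smul' c B := by
    rw [RingHom.id_apply, smul_eq_mul, Finset.mul_sum]
    exact Finset.sum_congr rfl fun i _ => det_updateRow_smul A i c (B i)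

theorem det_add_vecMulVec (A : Matrix ι ι R) (u w : ι → R) :
    (A + vecMulVec u w).det = A.det + A.detDeriv (vecMulVec u w) :=
  detRowAlternating.map_add_smul_const A u w

theorem det_sub_vecMulVec (A : Matrix ι ι R) (u w : ι → R) :
    (A - vecMulVec u w).det = A.det - A.detDeriv (vecMulVec u w) := by
  rw [sub_eq_add_neg, ← neg_vecMulVec, det_add_vecMulVec, neg_vecMulVec, map_neg,
    ← sub_eq_add_neg]

theorem hasDerivAt_det_add_smul {𝕜 : Type*} [NontriviallyNormedField 𝕜] (A B : Matrix ι ι 𝕜) :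
    HasDerivAt (fun t : 𝕜 => (A + t • B).det) (A.detDeriv B) 0 := by
  let detCML : ContinuousMultilinearMap 𝕜 (fun _ : ι => ι → 𝕜) 𝕜 :=
    ⟨detRowAlternating.toMultilinearMap, continuous_id.matrix_det⟩
  have hline : HasDerivAt (fun t : 𝕜 => of.symm A + t • of.symm B) (of.symm B) 0 := by
    simpa using ((hasDerivAt_id (0 : 𝕜)).smul_const (of.symm B)).const_add (of.symm A)
  have h := (detCML.hasFDerivAt (of.symm A)).comp_hasDerivAt_of_eq 0 hline (by simp)
  rwa [ContinuousMultilinearMap.linearDeriv_apply] at h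

end Matrix

theorem expected_det_rank_one_update_general
    (n ℓ : ℕ) (A : Matrix (Fin n) (Fin n) ℝ)
    (v : Fin ℓ → Fin n → ℝ) (p : Fin ℓ → ℝ)
    (hp1 : ∑ i, p i = 1) :
    ∑ i, p i * (A - Matrix.vecMulVec (v i) (v i)).det =
      (fun t : ℝ => (A + t • ∑ i, p i • Matrix.vecMulVec (v i) (v i)).det) 0 -
        deriv (fun t : ℝ => (A + t • ∑ i, p i • Matrix.vecMulVec (v i) (v i)).det) 0 := by
  rw [(hasDerivAt_det_add_smul A _).deriv, map_sum]
  simp only [det_sub_vecMulVec, mul_sub, Finset.sum_sub_distrib, ← Finset.sum_mul, hp1, one_mul,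
    map_smul, smul_eq_mul, zero_smul, add_zero]

/-- For every square matrix `A` and every random vector `r` with finite support
(values `v i` with probabilities `p i`),
`E det(A - r rᵀ) = (1 - ∂t) det(A + t ⬝ E[r rᵀ]) |_{t=0}`. -/
theorem expected_det_rank_one_update
    (n ℓ : ℕ) (A : Matrix (Fin n) (Fin n) ℝ)
    (v : Fin ℓ → Fin n → ℝ) (p : Fin ℓ → ℝ)
    (hp : ∀ i, 0 ≤ p i) (hp1 : ∑ i, p i = 1) :
    ∑ i, p i * (A - Matrix.vecMulVec (v i) (v i)).det =
      (fun t : ℝ => (A + t • ∑ i, p i • Matrix.vecMulVec (v i) (v i)).det) 0 -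
        deriv (fun t : ℝ => (A + t • ∑ i, p i • Matrix.vecMulVec (v i) (v i)).det) 0 :=
  expected_det_rank_one_update_general n ℓ A v p hp1
end

section
/- Let w_1,…,w_m be nonzero reals, W = diag(w_1,…,w_m), and a_1,…,a_m ∈ R^n the columns of a matrix A. If s_1,…,s_k are i.i.d. random indices with P(s = i) = w_i^{-2}/‖W^{-1}‖_F², then E det(xI - Σ_{i=1}^k w_{s_i}² a_{s_i} a_{s_i}ᵀ) = x^{n-k} · ∏_{i=1}^{rank(A)} (1 - (σ_i(A)²/‖W^{-1}‖_F²) ∂_x) x^k, where σ_i(A) are the nonzero singular values of A. -/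
/-!
Expanding `det (X • 1 - ∑ i, μ i • vecMulVec (v i) (v i))` multilinearly in its rows, row `j` is
either `X • eⱼ` or the row `-μ i * v i j • v i` of one rank-one term; this writes the
characteristic polynomial as a sum over partial maps `g : Fin n → Option ι`, and the term of `g`
vanishes unless `g` is injective where defined. For i.i.d. indices `s : Fin k → ι`, a partial
injection choosing `d` rows arises from exactly `k.descFactorial d` patterns, each of probability
`∏ p`, and since `p i * μ i = c` the `X ^ (n - d)` coefficient of the expectation is
`k.descFactorial d * c ^ d` times that of `charpoly (∑ i, vecMulVec (v i) (v i))`, which is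
`charpoly (A * Aᵀ)`. Because
`∂^[d] X ^ k = k.descFactorial d * X ^ (k - d)`, Vieta's formulas give the same coefficients for
`X ^ (n - k) * ∏ i, (1 - c σᵢ² ∂) X ^ k`.
-/

open Matrix Polynomial BigOperators Finset

section DerivativeOperator

variable {R : Type*} [CommRing R]

theorem foldr_sub_C_mul_derivative_eq_sum_powerset (c : ℕ → R) (r : ℕ) (q : R[X]) :
    (List.range r).foldr (fun i p => p - C (c i) * derivative p) q
      = ∑ t ∈ (range r).powerset, C (∏ i ∈ t, -c i) * derivative^[#t] q := by
  induction r generalizing q with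
  | zero => simp
  | succ r ih =>
    rw [List.range_succ, List.foldr_append, List.foldr_cons, List.foldr_nil, ih,
      range_add_one, sum_powerset_insert notMem_range_self, ← sum_add_distrib]
    refine sum_congr rfl fun t ht => ?_
    have hr : r ∉ t := fun h => by simpa using mem_powerset.mp ht h
    rw [iterate_derivative_sub, iterate_derivative_C_mul, prod_insert hr,
      card_insert_of_notMem hr, Function.iterate_succ_apply, map_mul, map_neg]
    ring

theorem X_pow_sub_mul_iterate_derivative_X_pow {k n : ℕ} (hkn : k ≤ n) (d : ℕ) :
    (X : R[X]) ^ (n - k) * derivative^[d] (X ^ k) = C (k.descFactorial d : R) * X ^ (n - d) := by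
  rw [iterate_derivative_X_pow_eq_C_mul]
  rcases le_or_gt d k with hdk | hkd
  · rw [mul_left_comm, ← pow_add, Nat.sub_add_sub_cancel hkn hdk]
  · simp [Nat.descFactorial_eq_zero_iff_lt.mpr hkd]

theorem coeff_prod_X_sub_C (l : ℕ → R) {n d : ℕ} (hd : d ≤ n) :
    (∏ i : Fin n, (X - C (l i))).coeff (n - d)
      = ∑ t ∈ powersetCard d (range n), ∏ i ∈ t, -l i := by
  simp_rw [Fin.prod_univ_eq_prod_range (fun i => X - C (l i)), sub_eq_add_neg, ← map_neg]
  rw [prod_X_add_C_coeff _ _ (by simp), card_range, Nat.sub_sub_self hd]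

theorem X_pow_sub_mul_foldr_eq_sum_coeff (l : ℕ → R) (c : R) {k r n : ℕ} (hkn : k ≤ n)
    (hrn : r ≤ n) (hl : ∀ i, r ≤ i → l i = 0) :
    X ^ (n - k) * (List.range r).foldr (fun i q => q - C (l i * c) * derivative q) (X ^ k)
      = ∑ d ∈ range (n + 1),
          C (k.descFactorial d * c ^ d * (∏ i : Fin n, (X - C (l i))).coeff (n - d)) *
            X ^ (n - d) := by
  have hvanish : ∀ t ∈ (range n).powerset, t ∉ (range r).powerset →
      C (∏ i ∈ t, -(l i * c)) * derivative^[#t] (X ^ k : R[X]) = 0 := by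
    intro t _ ht
    obtain ⟨i, hit, hir⟩ := not_subset.mp (mt mem_powerset.mpr ht)
    rw [prod_eq_zero hit (by simp [hl i (by simpa using hir)]), map_zero, zero_mul]
  rw [foldr_sub_C_mul_derivative_eq_sum_powerset,
    sum_subset (powerset_mono.mpr (range_subset_range.mpr hrn)) hvanish,
    sum_powerset, card_range, mul_sum]
  refine sum_congr rfl fun d hd => ?_
  rw [coeff_prod_X_sub_C l (Nat.lt_succ_iff.mp (mem_range.mp hd)), mul_sum, mul_sum, map_sum,
    sum_mul]
  refine sum_congr rfl fun t ht => ?_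
  rw [(mem_powersetCard.mp ht).2, mul_left_comm, X_pow_sub_mul_iterate_derivative_X_pow hkn,
    ← mul_assoc, ← map_mul]
  congr 2
  simp_rw [neg_mul_eq_neg_mul, prod_mul_distrib, prod_const, (mem_powersetCard.mp ht).2]
  ring

end DerivativeOperator

theorem sum_smul_sum_comp_eq_sum_smul {R M α β γ : Type*} [Semiring R] [AddCommMonoid M]
    [Module R M] [Fintype α] [Fintype β] [Fintype γ] [DecidableEq γ]
    (a : α → R) (F : γ → M) (φ : α → β → γ) :
    ∑ x, a x • ∑ y, F (φ x y)
      = ∑ z, (∑ x, ∑ y, if φ x y = z then a x else 0) • F z := by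
  simp_rw [sum_smul, ite_smul, zero_smul]
  rw [sum_comm]
  refine sum_congr rfl fun x _ => ?_
  rw [smul_sum, sum_comm]
  exact sum_congr rfl fun y _ => by rw [sum_ite_eq]; simp

theorem sum_C_mul_C_mul_X_pow_eq {R γ : Type*} [CommRing R] [Fintype γ] {n : ℕ} (a : ℕ → R)
    (N : γ → ℕ) (hN : ∀ g, N g ≤ n) (b : γ → R) :
    ∑ g, C (a (N g)) * (C (b g) * X ^ (n - N g))
      = ∑ d ∈ range (n + 1),
          C (a d * (∑ g, C (b g) * X ^ (n - N g)).coeff (n - d)) * X ^ (n - d) := by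
  classical
  have hcoeff : ∀ d ∈ range (n + 1),
      (∑ g, C (b g) * X ^ (n - N g)).coeff (n - d) = ∑ g with N g = d, b g := by
    intro d hd
    rw [finsetSum_coeff, sum_filter]
    refine sum_congr rfl fun g _ => ?_
    rw [coeff_C_mul_X_pow]
    refine if_congr ?_ rfl rfl
    have := hN g
    have := mem_range.mp hd
    omega
  rw [← sum_fiberwise_of_maps_to (g := N) fun g _ => mem_range.mpr (Nat.lt_succ_of_le (hN g))]
  refine sum_congr rfl fun d hd => ?_
  rw [hcoeff d hd, mul_sum, map_sum, sum_mul]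
  refine sum_congr rfl fun g hg => ?_
  rw [(mem_filter.mp hg).2, map_mul, mul_assoc]

noncomputable section RowChoice

variable {R : Type*} [CommRing R] {n : ℕ} {ι κ : Type*}

def rowChoiceMatrix (v : ι → Fin n → R) (g : Fin n → Option ι) : Matrix (Fin n) (Fin n) R :=
  Matrix.of fun j => (g j).elim ((1 : Matrix (Fin n) (Fin n) R) j) v

def numChosen (g : Fin n → Option ι) : ℕ := #{j | (g j).isSome}

def choiceTerm (μ : ι → R) (v : ι → Fin n → R) (g : Fin n → Option ι) : R[X] :=
  C ((∏ j, (g j).elim 1 (fun i => -(μ i * v i j))) * (rowChoiceMatrix v g).det) *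
    X ^ (n - numChosen g)

theorem numChosen_le (g : Fin n → Option ι) : numChosen g ≤ n :=
  (card_filter_le _ _).trans_eq (card_fin n)

theorem numChosen_map (s : κ → ι) (g : Fin n → Option κ) :
    numChosen (fun j => (g j).map s) = numChosen g := by
  simp [numChosen]

theorem rowChoiceMatrix_map (v : ι → Fin n → R) (s : κ → ι) (g : Fin n → Option κ) :
    rowChoiceMatrix v (fun j => (g j).map s) = rowChoiceMatrix (fun a => v (s a)) g := by
  ext j j'
  cases h : g j <;> simp [rowChoiceMatrix, h]

theorem choiceTerm_map (μ : ι → R) (v : ι → Fin n → R) (s : κ → ι) (g : Fin n → Option κ) :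
    choiceTerm μ v (fun j => (g j).map s)
      = choiceTerm (fun a => μ (s a)) (fun a => v (s a)) g := by
  have hprod : ∀ j, ((g j).map s).elim 1 (fun i => -(μ i * v i j))
      = (g j).elim 1 (fun a => -(μ (s a) * v (s a) j)) := by
    intro j
    cases g j <;> rfl
  simp only [choiceTerm, hprod, rowChoiceMatrix_map, numChosen_map]

theorem det_rowChoiceMatrix_eq_zero (v : ι → Fin n → R) {g : Fin n → Option ι}
    (hg : ¬ Set.InjOn g {j | (g j).isSome}) : (rowChoiceMatrix v g).det = 0 := by
  obtain ⟨j, hj, j', -, hgj, hne⟩ : ∃ j ∈ {j | (g j).isSome}, ∃ j' ∈ {j | (g j).isSome},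
      g j = g j' ∧ j ≠ j' := by
    simpa [Set.InjOn] using hg
  obtain ⟨i, hi⟩ := Option.isSome_iff_exists.mp hj
  refine det_zero_of_row_eq hne ?_
  ext j''
  simp [rowChoiceMatrix, ← hgj, hi]

theorem choiceTerm_eq_zero (μ : ι → R) (v : ι → Fin n → R) {g : Fin n → Option ι}
    (hg : ¬ Set.InjOn g {j | (g j).isSome}) : choiceTerm μ v g = 0 := by
  rw [choiceTerm, det_rowChoiceMatrix_eq_zero v hg, mul_zero, map_zero, zero_mul]

theorem prod_option_elim_X_C (g : Fin n → Option ι) (f : Fin n → ι → R) :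
    ∏ j, (g j).elim X (fun i => C (f j i))
      = C (∏ j, (g j).elim 1 (f j)) * X ^ (n - numChosen g) := by
  have hfactor : ∀ j, (g j).elim X (fun i => C (f j i))
      = C ((g j).elim 1 (f j)) * X ^ (if (g j).isSome then 0 else 1) := by
    intro j
    cases g j <;> simp
  simp_rw [hfactor, prod_mul_distrib, map_prod, prod_pow_eq_pow_sum, sum_ite, sum_const_zero,
    sum_const, smul_eq_mul, mul_one, zero_add]
  congr 2
  rw [numChosen, filter_not, card_sdiff_of_subset (filter_subset _ _), card_univ, Fintype.card_fin]

theorem prod_elim_mul_prod_elim (p μ : ι → R) (c : R) (hpμ : ∀ i, p i * μ i = c)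
    (v : ι → Fin n → R) (g : Fin n → Option ι) :
    (∏ j, (g j).elim 1 p) * ∏ j, (g j).elim 1 (fun i => -(μ i * v i j))
      = c ^ numChosen g * ∏ j, (g j).elim 1 (fun i => -(1 * v i j)) := by
  have hfactor : ∀ j, (g j).elim 1 p * (g j).elim 1 (fun i => -(μ i * v i j))
      = c ^ (if (g j).isSome then 1 else 0) * (g j).elim 1 (fun i => -(1 * v i j)) := by
    intro j
    cases g j with
    | none => simp
    | some i => simp only [Option.elim, Option.isSome_some, if_true, pow_one, ← hpμ i]; ring
  rw [← prod_mul_distrib, prod_congr rfl fun j _ => hfactor j, prod_mul_distrib,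
    prod_pow_eq_pow_sum, sum_boole, Nat.cast_id, numChosen]

variable [Fintype ι]

theorem charmatrix_sum_smul_vecMulVec_row (μ : ι → R) (v : ι → Fin n → R) (j : Fin n) :
    charmatrix (∑ i, μ i • vecMulVec (v i) (v i)) j
      = ∑ o : Option ι, o.elim X (fun i => C (-(μ i * v i j))) •
          ((rowChoiceMatrix v fun _ => o).map C) j := by
  funext j'
  simp only [Fintype.sum_option, Option.elim, Finset.sum_apply, Pi.smul_apply,
    charmatrix_apply, map_apply, rowChoiceMatrix, of_apply, Matrix.sum_apply, Matrix.smul_apply,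
    vecMulVec_apply, smul_eq_mul, diagonal_apply, one_apply, apply_ite C, map_one, map_zero,
    map_sum, mul_ite, mul_one, mul_zero, map_neg, map_mul]
  rw [sub_eq_add_neg, ← sum_neg_distrib]
  congr 1
  refine sum_congr rfl fun i _ => ?_
  ring

theorem charpoly_sum_smul_vecMulVec (μ : ι → R) (v : ι → Fin n → R) :
    (∑ i, μ i • vecMulVec (v i) (v i)).charpoly = ∑ g, choiceTerm μ v g := by
  classical
  have hexp := (detRowAlternating (R := R[X]) (n := Fin n)).toMultilinearMap.map_sum
    fun j (o : Option ι) => o.elim X (fun i => C (-(μ i * v i j))) •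
      ((rowChoiceMatrix v fun _ => o).map C) j
  simp only [AlternatingMap.coe_multilinearMap, MultilinearMap.map_smul_univ] at hexp
  rw [charpoly, det, show charmatrix _ = _ from funext (charmatrix_sum_smul_vecMulVec_row μ v)]
  refine (hexp.trans (sum_congr rfl fun g _ => ?_))
  have hrows : (fun j => ((rowChoiceMatrix v fun _ => g j).map C) j)
      = (rowChoiceMatrix v g).map C := by
    ext j j'
    rfl
  rw [hrows, smul_eq_mul, prod_option_elim_X_C, choiceTerm, map_mul, ← det,
    ← RingHom.mapMatrix_apply, ← RingHom.map_det]
  ring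

end RowChoice

section Sampling

variable {R : Type*} [CommRing R] {n k : ℕ} {ι : Type*} [Fintype ι] [DecidableEq ι]

theorem natCard_partialInjections (S : Finset (Fin n)) :
    Nat.card {gk : Fin n → Option (Fin k) // (∀ j, (gk j).isSome ↔ j ∈ S) ∧
        Set.InjOn gk {j | (gk j).isSome}} = k.descFactorial #S := by
  let e : {gk : Fin n → Option (Fin k) // (∀ j, (gk j).isSome ↔ j ∈ S) ∧
      Set.InjOn gk {j | (gk j).isSome}} ≃ (S ↪ Fin k) :=
    { toFun := fun gk => ⟨fun j => (gk.1 j).get ((gk.2.1 j).mpr j.2), fun j j' h =>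
        Subtype.ext (gk.2.2 (by simpa using (gk.2.1 j).mpr j.2)
          (by simpa using (gk.2.1 j').mpr j'.2) (Option.get_inj.mp h))⟩
      invFun := fun f => ⟨fun j => if h : j ∈ S then some (f ⟨j, h⟩) else none,
        fun j => by by_cases h : j ∈ S <;> simp [h], fun j hj j' hj' hjj' => by
          by_cases h : j ∈ S <;> by_cases h' : j' ∈ S <;> simp_all⟩
      left_inv := fun gk => Subtype.ext <| funext fun j => by
        dsimp only
        by_cases h : j ∈ S
        · rw [dif_pos h]
          exact Option.some_get _
        · rw [dif_neg h]
          exact (Option.not_isSome_iff_eq_none.mp ((gk.2.1 j).not.mpr h)).symm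
      right_inv := fun f => by ext; simp }
  rw [Nat.card_congr e, Nat.card_eq_fintype_card, Fintype.card_embedding_eq, Fintype.card_fin,
    Fintype.card_coe]

theorem sum_ite_comp_map_eq_prod (p : ι → R) (hp : ∑ i, p i = 1) {g : Fin n → Option ι}
    {gk : Fin n → Option (Fin k)} (hsupp : ∀ j, (gk j).isSome = (g j).isSome)
    (hgk : Set.InjOn gk {j | (gk j).isSome}) :
    ∑ s : Fin k → ι, (if (fun j => (gk j).map s) = g then ∏ a, p (s a) else 0)
      = ∏ j, (g j).elim 1 p := by
  classical
  have hcond : ∀ s : Fin k → ι, (fun j => (gk j).map s) = g ↔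
      ∀ a j, gk j = some a → g j = some (s a) := by
    refine fun s => ⟨fun h a j hj => by simp [← h, hj], fun h => funext fun j => ?_⟩
    cases hj : gk j with
    | none =>
      simp only [Option.map_none]
      exact (Option.not_isSome_iff_eq_none.mp (by rw [← hsupp j, hj]; simp)).symm
    | some a => simp [h a j hj]
  have hfiber : ∀ a, ∑ x, p x * (if ∀ j, gk j = some a → g j = some x then 1 else 0)
      = ∏ j with gk j = some a, (g j).elim 1 p := by
    intro a
    rcases (univ.filter fun j => gk j = some a).eq_empty_or_nonempty with hempty | ⟨j, hj⟩
    · have hnone : ∀ j, gk j ≠ some a := fun j hj =>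
        filter_eq_empty_iff.mp hempty (mem_univ j) hj
      simp [hnone, hp]
    · have hja : gk j = some a := (mem_filter.mp hj).2
      have hsingle : (univ.filter fun j => gk j = some a) = {j} := by
        refine eq_singleton_iff_unique_mem.mpr ⟨hj, fun j' hj' => ?_⟩
        exact hgk (by simp [(mem_filter.mp hj').2]) (by simp [hja])
          ((mem_filter.mp hj').2.trans hja.symm)
      obtain ⟨l, hl⟩ := Option.isSome_iff_exists.mp ((hsupp j).symm.trans (by simp [hja]))
      have hiff : ∀ x, (∀ j', gk j' = some a → g j' = some x) ↔ l = x := by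
        refine fun x => ⟨fun h => by simpa [hl] using h j hja, fun hx j' hj' => ?_⟩
        rw [hgk (by simp [hj']) (by simp [hja]) (hj'.trans hja.symm), hl, hx]
      simp_rw [hsingle, prod_singleton, hiff, mul_ite, mul_one, mul_zero, sum_ite_eq, mem_univ,
        if_true, hl, Option.elim_some]
  have hnone : ∏ j with gk j = none, (g j).elim 1 p = 1 :=
    prod_eq_one fun j hj => by
      have h : g j = none :=
        Option.not_isSome_iff_eq_none.mp (by rw [← hsupp j, (mem_filter.mp hj).2]; simp)
      simp [h]
  calc ∑ s : Fin k → ι, (if (fun j => (gk j).map s) = g then ∏ a, p (s a) else 0)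
      = ∑ s : Fin k → ι,
          ∏ a, p (s a) * (if ∀ j, gk j = some a → g j = some (s a) then 1 else 0) := by
        refine sum_congr rfl fun s _ => ?_
        rw [prod_mul_distrib, prod_boole, mul_ite, mul_one, mul_zero]
        simp only [mem_univ, true_implies, ← hcond s]
    _ = ∏ a, ∏ j with gk j = some a, (g j).elim 1 p := by
        rw [← Fintype.prod_sum fun a x =>
          p x * (if ∀ j, gk j = some a → g j = some x then 1 else 0)]
        exact prod_congr rfl fun a _ => hfiber a
    _ = ∏ j, (g j).elim 1 p := by
        rw [← prod_fiberwise univ gk, Fintype.prod_option, hnone, one_mul]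

theorem sum_ite_comp_map_eq_zero (p : ι → R) {g : Fin n → Option ι}
    (hg : Set.InjOn g {j | (g j).isSome}) {gk : Fin n → Option (Fin k)}
    (hgk : ¬ ((∀ j, (gk j).isSome = (g j).isSome) ∧ Set.InjOn gk {j | (gk j).isSome})) :
    ∑ s : Fin k → ι, (if (fun j => (gk j).map s) = g then ∏ a, p (s a) else 0) = 0 := by
  refine sum_eq_zero fun s _ => if_neg fun hs => hgk ⟨fun j => by simp [← hs], ?_⟩
  intro j hj j' _ hjj'
  have hmap : g j = g j' := by simp only [← hs, hjj']
  exact hg (by simpa [← hs] using hj) (by simpa [← hs, hjj'] using hj) hmap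

theorem sum_sum_ite_comp_map_eq (p : ι → R) (hp : ∑ i, p i = 1) {g : Fin n → Option ι}
    (hg : Set.InjOn g {j | (g j).isSome}) :
    ∑ s : Fin k → ι, ∑ gk : Fin n → Option (Fin k),
        (if (fun j => (gk j).map s) = g then ∏ a, p (s a) else 0)
      = k.descFactorial (numChosen g) * ∏ j, (g j).elim 1 p := by
  classical
  have hterm : ∀ gk : Fin n → Option (Fin k),
      ∑ s : Fin k → ι, (if (fun j => (gk j).map s) = g then ∏ a, p (s a) else 0)
        = if (∀ j, (gk j).isSome = (g j).isSome) ∧ Set.InjOn gk {j | (gk j).isSome}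
          then ∏ j, (g j).elim 1 p else 0 := by
    intro gk
    split_ifs with hgk
    · exact sum_ite_comp_map_eq_prod p hp hgk.1 hgk.2
    · exact sum_ite_comp_map_eq_zero p hg hgk
  have hcard : #{gk : Fin n → Option (Fin k) | (∀ j, (gk j).isSome = (g j).isSome) ∧
      Set.InjOn gk {j | (gk j).isSome}} = k.descFactorial (numChosen g) := by
    rw [← Fintype.card_subtype, ← Nat.card_eq_fintype_card, numChosen,
      ← natCard_partialInjections]
    exact Nat.card_congr (Equiv.subtypeEquivRight fun gk => by simp)
  rw [sum_comm, sum_congr rfl fun gk _ => hterm gk, sum_ite, sum_const_zero, add_zero, sum_const,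
    hcard, nsmul_eq_mul]

end Sampling

theorem sum_prod_mul_charpoly_sum_smul_vecMulVec {R : Type*} [CommRing R] {n : ℕ} {ι : Type*}
    [Fintype ι] [DecidableEq ι] (p μ : ι → R) (c : R) (hp : ∑ i, p i = 1)
    (hpμ : ∀ i, p i * μ i = c) (v : ι → Fin n → R) (k : ℕ) :
    ∑ s : Fin k → ι,
        C (∏ a, p (s a)) * (∑ a, μ (s a) • vecMulVec (v (s a)) (v (s a))).charpoly
      = ∑ d ∈ range (n + 1),
          C (k.descFactorial d * c ^ d * (∑ i, vecMulVec (v i) (v i)).charpoly.coeff (n - d)) *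
            X ^ (n - d) := by
  classical
  have hweight : ∀ g : Fin n → Option ι,
      (∑ s : Fin k → ι, ∑ gk : Fin n → Option (Fin k),
          if (fun j => (gk j).map s) = g then ∏ a, p (s a) else 0) • choiceTerm μ v g
        = C (k.descFactorial (numChosen g) * c ^ numChosen g) * choiceTerm (fun _ => 1) v g := by
    intro g
    by_cases hg : Set.InjOn g {j | (g j).isSome}
    · rw [sum_sum_ite_comp_map_eq p hp hg, smul_eq_C_mul, choiceTerm, choiceTerm, ← mul_assoc,
        ← mul_assoc, ← map_mul, ← map_mul, mul_assoc _ (∏ j, _), ← mul_assoc (∏ j, _),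
        prod_elim_mul_prod_elim p μ c hpμ]
      ring_nf
    · simp [choiceTerm_eq_zero _ _ hg]
  have hcharpoly :
      (∑ i, vecMulVec (v i) (v i)).charpoly = ∑ g, choiceTerm (fun _ => 1) v g := by
    simpa using charpoly_sum_smul_vecMulVec (fun _ => (1 : R)) v
  calc _
      = ∑ s : Fin k → ι, (∏ a, p (s a)) •
          ∑ gk : Fin n → Option (Fin k), choiceTerm μ v fun j => (gk j).map s := by
        simp_rw [charpoly_sum_smul_vecMulVec, ← choiceTerm_map, smul_eq_C_mul]
    _ = ∑ g, C (k.descFactorial (numChosen g) * c ^ numChosen g) *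
          choiceTerm (fun _ => 1) v g := by
        rw [sum_smul_sum_comp_eq_sum_smul]
        exact sum_congr rfl fun g _ => hweight g
    _ = _ := by
        rw [hcharpoly]
        exact sum_C_mul_C_mul_X_pow_eq (fun d => k.descFactorial d * c ^ d) numChosen
          numChosen_le _

theorem mul_transpose_eq_sum_vecMulVec {R : Type*} [CommRing R] {n m : ℕ}
    (A : Matrix (Fin n) (Fin m) R) :
    A * Aᵀ = ∑ l, vecMulVec (fun j => A j l) (fun j => A j l) := by
  ext j j'
  simp [mul_apply, vecMulVec_apply, Matrix.sum_apply]

theorem expected_charpoly_formula_general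
    (n m k : ℕ) (A : Matrix (Fin n) (Fin m) ℝ)
    (w : Fin m → ℝ) (hw : ∀ i, w i ≠ 0)
    (σ : ℕ → ℝ)
    (hchar : (A * Aᵀ).charpoly = ∏ i : Fin n, (X - C ((σ (i : ℕ)) ^ 2)))
    (hzero : ∀ i, A.rank ≤ i → σ i = 0)
    (hk : k ≤ A.rank) :
    (∑ s : Fin k → Fin m,
        C (∏ i, ((w (s i))⁻¹ ^ 2 / ∑ j, (w j)⁻¹ ^ 2)) *
          (∑ i, ((w (s i)) ^ 2) •
              Matrix.vecMulVec (fun j => A j (s i)) (fun j => A j (s i))).charpoly)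
      =
      X ^ (n - k) *
        (List.range A.rank).foldr
          (fun i q => q - C ((σ i) ^ 2 / ∑ j, (w j)⁻¹ ^ 2) * derivative q)
          (X ^ k) := by
  have hrn : A.rank ≤ n := by simpa using A.rank_le_card_height
  rcases Nat.eq_zero_or_pos m with rfl | hm
  · have hr : A.rank = 0 := by simpa using A.rank_le_card_width
    obtain rfl : k = 0 := by omega
    simp [hr, charpoly_zero]
  set Z := ∑ j, (w j)⁻¹ ^ 2
  have hZ : 0 < Z := sum_pos (fun j _ => by have := hw j; positivity) ⟨⟨0, hm⟩, mem_univ _⟩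
  simp_rw [div_eq_mul_inv]
  rw [sum_prod_mul_charpoly_sum_smul_vecMulVec (fun l => (w l)⁻¹ ^ 2 * Z⁻¹) (fun l => w l ^ 2)
      Z⁻¹ (by rw [← sum_mul, mul_inv_cancel₀ hZ.ne']) (fun l => by field_simp [hw l])
      (fun l j => A j l) k,
    X_pow_sub_mul_foldr_eq_sum_coeff (fun i => σ i ^ 2) Z⁻¹ (hk.trans hrn) hrn
      (fun i hi => by simp [hzero i hi]),
    ← mul_transpose_eq_sum_vecMulVec, hchar]

/-- The expected characteristic polynomial of `∑_{i=1}^k w_{s_i}² a_{s_i} a_{s_i}ᵀ`,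
where the i.i.d. indices `s_i` take the value `i` with probability
`w_i⁻² / ‖W⁻¹‖_F²`, equals
`x^{n-k} ∏_{i=1}^{rank A} (1 - (σ_i(A)²/‖W⁻¹‖_F²) ∂_x) x^k`.
The singular values `σ` of `A` are encoded via the characteristic polynomial of `A Aᵀ`. -/
theorem expected_charpoly_formula
    (n m k : ℕ) (A : Matrix (Fin n) (Fin m) ℝ)
    (w : Fin m → ℝ) (hw : ∀ i, w i ≠ 0)
    (σ : ℕ → ℝ)
    (hchar : (A * Aᵀ).charpoly = ∏ i : Fin n, (X - C ((σ (i : ℕ)) ^ 2)))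
    (hmono : Antitone σ)
    (hpos : ∀ i, i < A.rank → 0 < σ i)
    (hzero : ∀ i, A.rank ≤ i → σ i = 0)
    (hk : k ≤ A.rank) :
    (∑ s : Fin k → Fin m,
        C (∏ i, ((w (s i))⁻¹ ^ 2 / ∑ j, (w j)⁻¹ ^ 2)) *
          (∑ i, ((w (s i)) ^ 2) •
              Matrix.vecMulVec (fun j => A j (s i)) (fun j => A j (s i))).charpoly)
      =
      X ^ (n - k) *
        (List.range A.rank).foldr
          (fun i q => q - C ((σ i) ^ 2 / ∑ j, (w j)⁻¹ ^ 2) * derivative q)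
          (X ^ k) :=
  expected_charpoly_formula_general n m k A w hw σ hchar hzero hk
end

section
/- Let p(x) be a real-rooted polynomial of degree n, let b be a real number strictly less than the smallest root of p, and let α > 0 satisfy -p'(b)/p(b) ≤ α. Then for any t > 0, setting δ = t/(1 + tα), the polynomial q = p - t·p' is real-rooted, b + δ is strictly less than the smallest root of q, and -q'(b+δ)/q(b+δ) ≤ -p'(b)/p(b). -/
open Polynomial Multiset

namespace LowerBarrierAux

variable {K : Type*} [Field K]

theorem eval_prod_ne_zero (s : Multiset K) {x : K} (h : ∀ r ∈ s, x ≠ r) :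
    ((s.map fun r => X - C r).prod).eval x ≠ 0 := by
  rw [eval_multiset_prod, Multiset.map_map]
  refine Multiset.prod_ne_zero ?_
  simp only [Multiset.mem_map, Function.comp_apply, eval_sub, eval_X, eval_C]
  rintro ⟨r, hr, hr0⟩
  exact sub_ne_zero.2 (h r hr) hr0

theorem eval_derivative_prod (s : Multiset K) {x : K} (h : ∀ r ∈ s, x ≠ r) :
    (derivative ((s.map fun r => X - C r).prod)).eval x =
      ((s.map fun r => X - C r).prod).eval x * (s.map fun r => (x - r)⁻¹).sum := by
  induction s using Multiset.induction with
  | empty => simp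
  | cons r s ih =>
    have hx : x - r ≠ 0 := sub_ne_zero.2 (h r (Multiset.mem_cons_self r s))
    have ih' := ih fun a ha => h a (Multiset.mem_cons_of_mem ha)
    simp only [Multiset.map_cons, Multiset.prod_cons, Multiset.sum_cons, derivative_mul,
      derivative_X_sub_C, one_mul, eval_add, eval_mul, eval_sub, eval_X, eval_C, ih']
    field_simp

theorem eval_derivative2_prod (s : Multiset K) {x : K} (h : ∀ r ∈ s, x ≠ r) :
    (derivative (derivative ((s.map fun r => X - C r).prod))).eval x =
      ((s.map fun r => X - C r).prod).eval x *
        (((s.map fun r => (x - r)⁻¹).sum) ^ 2 - (s.map fun r => ((x - r)⁻¹) ^ 2).sum) := by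
  induction s using Multiset.induction with
  | empty => simp
  | cons r s ih =>
    have hx : x - r ≠ 0 := sub_ne_zero.2 (h r (Multiset.mem_cons_self r s))
    have h' : ∀ a ∈ s, x ≠ a := fun a ha => h a (Multiset.mem_cons_of_mem ha)
    have ih' := ih h'
    have hd1 := eval_derivative_prod s h'
    simp only [Multiset.map_cons, Multiset.prod_cons, Multiset.sum_cons, derivative_mul,
      derivative_X_sub_C, one_mul, derivative_add, eval_add, eval_mul, eval_sub, eval_X,
      eval_C, ih', hd1]
    field_simp
    ring

theorem im_multiset_sum (m : Multiset ℂ) : m.sum.im = (m.map Complex.im).sum := by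
  induction m using Multiset.induction with
  | empty => simp
  | cons a m ih => simp [ih]

theorem multiset_cheb (s : Multiset ℝ) (A B : ℝ → ℝ)
    (h : ∀ i ∈ s, ∀ j ∈ s, A i * B i * A j + A j * B j * A i ≤ B i * (A j) ^ 2 + B j * (A i) ^ 2) :
    (s.map fun i => A i * B i).sum * (s.map A).sum ≤
      (s.map B).sum * (s.map fun i => (A i) ^ 2).sum := by
  induction s using Multiset.induction with
  | empty => simp
  | cons a s ih =>
    have ih' := ih fun i hi j hj =>
      h i (Multiset.mem_cons_of_mem hi) j (Multiset.mem_cons_of_mem hj)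
    have haa := h a (Multiset.mem_cons_self a s) a (Multiset.mem_cons_self a s)
    have hterm : (s.map fun i => A a * B a * A i + A i * B i * A a).sum ≤
        (s.map fun i => B a * (A i) ^ 2 + B i * (A a) ^ 2).sum := by
      refine Multiset.sum_map_le_sum_map _ _ fun i hi => ?_
      exact h a (Multiset.mem_cons_self a s) i (Multiset.mem_cons_of_mem hi)
    rw [Multiset.sum_map_add, Multiset.sum_map_add] at hterm
    rw [Multiset.sum_map_mul_left, Multiset.sum_map_mul_right, Multiset.sum_map_mul_left,
      Multiset.sum_map_mul_right] at hterm
    simp only [Multiset.map_cons, Multiset.sum_cons]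
    nlinarith [hterm, ih']

theorem pairwise_ineq {b y i j : ℝ} (hby : b < y) (hi : y < i) (hj : y < j) :
    (i - y)⁻¹ * (i - b)⁻¹ * (j - y)⁻¹ + (j - y)⁻¹ * (j - b)⁻¹ * (i - y)⁻¹ ≤
      (i - b)⁻¹ * ((j - y)⁻¹) ^ 2 + (j - b)⁻¹ * ((i - y)⁻¹) ^ 2 := by
  have hiy : (0:ℝ) < i - y := by linarith
  have hjy : (0:ℝ) < j - y := by linarith
  have hib : (0:ℝ) < i - b := by linarith
  have hjb : (0:ℝ) < j - b := by linarith
  have key : (i - b)⁻¹ * ((j - y)⁻¹) ^ 2 + (j - b)⁻¹ * ((i - y)⁻¹) ^ 2 -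
      ((i - y)⁻¹ * (i - b)⁻¹ * (j - y)⁻¹ + (j - y)⁻¹ * (j - b)⁻¹ * (i - y)⁻¹) =
      (y - b) * (i - j) ^ 2 *
        (((i - y)⁻¹) ^ 2 * ((j - y)⁻¹) ^ 2 * (i - b)⁻¹ * (j - b)⁻¹) := by
    field_simp
    ring
  have pos : (0:ℝ) ≤ (y - b) * (i - j) ^ 2 *
      (((i - y)⁻¹) ^ 2 * ((j - y)⁻¹) ^ 2 * (i - b)⁻¹ * (j - b)⁻¹) :=
    mul_nonneg (mul_nonneg (le_of_lt (sub_pos.2 hby)) (sq_nonneg _)) (by positivity)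
  linarith [key, pos]

end LowerBarrierAux

open LowerBarrierAux

set_option maxHeartbeats 1000000 in
/-- The lower barrier function lemma: if `p` is real-rooted of degree `n`,
`b` is strictly below all roots of `p` and the barrier `Φ_p(b) = -p'(b)/p(b) ≤ α`,
then for `t > 0` and `δ = t/(1+tα)`, the polynomial `q = p - t p'` is real-rooted,
`b + δ` is strictly below all roots of `q`, and `Φ_q(b+δ) ≤ Φ_p(b)`. -/
theorem lower_barrier_shift
    (n : ℕ) (hn : 0 < n) (p : Polynomial ℝ)
    (hdeg : p.natDegree = n) (hlc : 0 < p.leadingCoeff)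
    (hroots : (p.roots).card = n)
    (b α : ℝ) (hα : 0 < α)
    (hb : ∀ x ∈ p.roots, b < x)
    (hbar : -(p.derivative.eval b) / p.eval b ≤ α)
    (t : ℝ) (ht : 0 < t) :
    ((p - C t * p.derivative).roots).card = (p - C t * p.derivative).natDegree ∧
      (∀ x ∈ (p - C t * p.derivative).roots, b + t / (1 + t * α) < x) ∧
      -((p - C t * p.derivative).derivative.eval (b + t / (1 + t * α))) /
          (p - C t * p.derivative).eval (b + t / (1 + t * α)) ≤
        -(p.derivative.eval b) / p.eval b := by
  classical
  have hlc0 : p.leadingCoeff ≠ 0 := ne_of_gt hlc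
  have hp0 : p ≠ 0 := leadingCoeff_ne_zero.mp hlc0
  have hroots' : p.roots.card = p.natDegree := by rw [hroots, hdeg]
  have hD : (0:ℝ) < 1 + t * α := by positivity
  have hδpos : 0 < t / (1 + t * α) := div_pos ht hD
  set δ := t / (1 + t * α) with hδ
  set y := b + δ with hy
  set s := p.roots with hs
  have hrep : p = C p.leadingCoeff * (s.map fun a => X - C a).prod := by
    rw [hs]; exact (C_leadingCoeff_mul_prod_multiset_X_sub_C hroots').symm
  have hevalne : ∀ {x : ℝ}, (∀ r ∈ s, x ≠ r) → p.eval x ≠ 0 := by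
    intro x hx
    rw [hrep, eval_mul, eval_C]
    exact mul_ne_zero hlc0 (eval_prod_ne_zero _ hx)
  have hd1 : ∀ {x : ℝ}, (∀ r ∈ s, x ≠ r) →
      p.derivative.eval x = p.eval x * (s.map fun r => (x - r)⁻¹).sum := by
    intro x hx
    conv_lhs => rw [hrep]
    conv_rhs => rw [hrep]
    rw [derivative_C_mul, eval_mul, eval_C, eval_derivative_prod _ hx, eval_mul, eval_C]
    ring
  have hd2 : ∀ {x : ℝ}, (∀ r ∈ s, x ≠ r) →
      (derivative (derivative p)).eval x = p.eval x *
        (((s.map fun r => (x - r)⁻¹).sum) ^ 2 - (s.map fun r => ((x - r)⁻¹) ^ 2).sum) := by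
    intro x hx
    conv_lhs => rw [hrep]
    conv_rhs => rw [hrep]
    rw [derivative_C_mul, derivative_C_mul, eval_mul, eval_C, eval_derivative2_prod _ hx,
      eval_mul, eval_C]
    ring
  have hflip : ∀ x : ℝ, (s.map fun r => (x - r)⁻¹).sum = -(s.map fun r => (r - x)⁻¹).sum := by
    intro x
    have e : (s.map fun r => (x - r)⁻¹) = s.map fun r => -((r - x)⁻¹) :=
      Multiset.map_congr rfl fun r hr => by rw [← neg_sub r x, inv_neg]
    rw [e, Multiset.sum_map_neg]
  have hflip2 : ∀ x : ℝ, (s.map fun r => ((x - r)⁻¹) ^ 2).sum =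
      (s.map fun r => ((r - x)⁻¹) ^ 2).sum := by
    intro x
    exact congrArg Multiset.sum (Multiset.map_congr rfl fun r hr => by
      rw [← neg_sub r x, inv_neg, neg_sq])
  -- barrier at b
  have hbne : ∀ r ∈ s, b ≠ r := fun r hr => ne_of_lt (hb r hr)
  have hpb : p.eval b ≠ 0 := hevalne hbne
  have hPhib : -(p.derivative.eval b) / p.eval b = (s.map fun r => (r - b)⁻¹).sum := by
    rw [hd1 hbne, hflip b]
    field_simp
  have hSC : (s.map fun r => (r - b)⁻¹).sum ≤ α := hPhib ▸ hbar
  have hgap : ∀ r ∈ s, (r - b)⁻¹ ≤ α := by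
    intro r hr
    refine le_trans ?_ hSC
    refine Multiset.single_le_sum ?_ _ (Multiset.mem_map_of_mem _ hr)
    intro x hx
    obtain ⟨a, ha, rfl⟩ := Multiset.mem_map.1 hx
    exact le_of_lt (inv_pos.2 (sub_pos.2 (hb a ha)))
  have hylt : ∀ r ∈ s, y < r := by
    intro r hr
    have hrb : 0 < r - b := sub_pos.2 (hb r hr)
    have h1 : α⁻¹ ≤ r - b := (inv_le_comm₀ hα hrb).2 (hgap r hr)
    have h2 : δ < α⁻¹ := by
      rw [hδ, div_lt_iff₀ hD]
      have e2 : α⁻¹ * α = 1 := inv_mul_cancel₀ (ne_of_gt hα)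
      nlinarith [inv_pos.2 hα]
    rw [hy]; linarith
  have hby : b < y := by rw [hy]; linarith
  have hyne : ∀ r ∈ s, y ≠ r := fun r hr => ne_of_lt (hylt r hr)
  have hpy : p.eval y ≠ 0 := hevalne hyne
  -- the shifted polynomial
  set q := p - C t * p.derivative with hq
  have hqdeg : q.natDegree = n := by
    rw [hq]
    have h1 : (C t * p.derivative).natDegree < p.natDegree := by
      have h2 : (C t * p.derivative).natDegree ≤ p.derivative.natDegree := natDegree_C_mul_le t _
      have h3 : p.derivative.natDegree ≤ p.natDegree - 1 := natDegree_derivative_le p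
      rw [hdeg] at h3 ⊢
      omega
    rw [natDegree_sub_eq_left_of_natDegree_lt h1, hdeg]
  have hq0 : q ≠ 0 := by
    intro h
    rw [h, natDegree_zero] at hqdeg
    omega
  -- Part 1 : root count via ℂ
  have hcardq : q.roots.card = q.natDegree := by
    have hfinj : Function.Injective (Complex.ofRealHom : ℝ →+* ℂ) := Complex.ofReal_injective
    set Q := q.map (Complex.ofRealHom : ℝ →+* ℂ) with hQdef
    have hQ0 : Q ≠ 0 := (Polynomial.map_ne_zero_iff hfinj).mpr hq0
    have hQdeg : Q.natDegree = n := by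
      rw [hQdef, natDegree_map_eq_of_injective hfinj, hqdeg]
    have hQcard : Q.roots.card = n := by
      rw [← hQdeg]
      exact splits_iff_card_roots.mp (IsAlgClosed.splits Q)
    have hmaprep : p.map (Complex.ofRealHom : ℝ →+* ℂ) =
        C ((p.leadingCoeff : ℂ)) * ((s.map fun r : ℝ => (r:ℂ)).map fun a => X - C a).prod := by
      conv_lhs => rw [hrep]
      rw [Polynomial.map_mul, Polynomial.map_C, Polynomial.map_multiset_prod,
        Multiset.map_map, Multiset.map_map]
      simp
    have him : ∀ z ∈ Q.roots, z.im = 0 := by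
      intro z hz
      have hzr : Q.eval z = 0 := (mem_roots hQ0).1 hz
      by_cases hall : ∀ r ∈ s.map (fun r : ℝ => (r : ℂ)), z ≠ r
      · have hpz : (p.map (Complex.ofRealHom : ℝ →+* ℂ)).eval z ≠ 0 := by
          rw [hmaprep, eval_mul, eval_C]
          refine mul_ne_zero ?_ (eval_prod_ne_zero _ hall)
          simpa using hlc0
        have hdz : (derivative (p.map (Complex.ofRealHom : ℝ →+* ℂ))).eval z =
            (p.map (Complex.ofRealHom : ℝ →+* ℂ)).eval z *
              ((s.map fun r : ℝ => (r:ℂ)).map fun r => (z - r)⁻¹).sum := by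
          conv_lhs => rw [hmaprep]
          conv_rhs => rw [hmaprep]
          rw [derivative_C_mul, eval_mul, eval_C, eval_derivative_prod _ hall,
            eval_mul, eval_C]
          ring
        have hQz : Q.eval z = (p.map (Complex.ofRealHom : ℝ →+* ℂ)).eval z -
            (t : ℂ) * (derivative (p.map (Complex.ofRealHom : ℝ →+* ℂ))).eval z := by
          rw [hQdef, hq, Polynomial.map_sub, Polynomial.map_mul, Polynomial.map_C,
            eval_sub, eval_mul, eval_C, ← derivative_map]
          simp
        rw [hQz, hdz] at hzr
        set SS := ((s.map fun r : ℝ => (r:ℂ)).map fun r => (z - r)⁻¹).sum with hSS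
        have hone : (1 : ℂ) = (t : ℂ) * SS := by
          have hfac : (p.map (Complex.ofRealHom : ℝ →+* ℂ)).eval z * (1 - (t:ℂ) * SS) = 0 := by
            rw [mul_sub, mul_one]; linear_combination hzr
          rcases mul_eq_zero.1 hfac with h | h
          · exact absurd h hpz
          · linear_combination h
        have himS := congrArg Complex.im hone
        rw [Complex.one_im, Complex.mul_im, Complex.ofReal_re, Complex.ofReal_im,
          zero_mul, add_zero] at himS
        have hSSim : SS.im = 0 := by
          rcases mul_eq_zero.1 himS.symm with h | h
          · exact absurd h (ne_of_gt ht)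
          · exact h
        have hsum : SS.im = (s.map fun a : ℝ =>
            -z.im * (Complex.normSq (z - (a:ℂ)))⁻¹).sum := by
          rw [hSS, im_multiset_sum, Multiset.map_map, Multiset.map_map]
          refine congrArg Multiset.sum (Multiset.map_congr rfl fun a ha => ?_)
          simp only [Function.comp_apply, Complex.inv_im, Complex.sub_im,
            Complex.ofReal_im, sub_zero, div_eq_mul_inv, neg_mul]
        rw [Multiset.sum_map_mul_left] at hsum
        by_contra hzim
        have hWpos : 0 < (s.map fun a : ℝ => (Complex.normSq (z - (a:ℂ)))⁻¹).sum := by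
          have hsne : s ≠ 0 := by
            intro h
            rw [h] at hroots
            simp at hroots
            omega
          obtain ⟨a, ha⟩ := Multiset.exists_mem_of_ne_zero hsne
          have hzs : z - (a:ℂ) ≠ 0 :=
            sub_ne_zero.2 (hall _ (Multiset.mem_map_of_mem _ ha))
          have hterm : 0 < (Complex.normSq (z - (a:ℂ)))⁻¹ :=
            inv_pos.2 (Complex.normSq_pos.2 hzs)
          refine lt_of_lt_of_le hterm ?_
          refine Multiset.single_le_sum ?_ _ (Multiset.mem_map_of_mem _ ha)
          intro w hw
          obtain ⟨a', _, rfl⟩ := Multiset.mem_map.1 hw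
          exact inv_nonneg.2 (Complex.normSq_nonneg _)
        have : -z.im * (s.map fun a : ℝ => (Complex.normSq (z - (a:ℂ)))⁻¹).sum = 0 := by
          rw [← hsum, hSSim]
        rcases mul_eq_zero.1 this with h | h
        · exact hzim (by linarith [neg_eq_zero.1 h])
        · exact (ne_of_gt hWpos) h
      · push_neg at hall
        obtain ⟨r, hr, rfl⟩ := hall
        obtain ⟨a, ha, rfl⟩ := Multiset.mem_map.1 hr
        simp
    have hcount : ∀ x : ℝ, (Q.roots.map Complex.re).count x = q.roots.count x := by
      intro x
      have h1 : (Q.roots.map Complex.re).map (fun r : ℝ => (r : ℂ)) = Q.roots := by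
        rw [Multiset.map_map]
        calc Q.roots.map ((fun r : ℝ => (r:ℂ)) ∘ Complex.re)
            = Q.roots.map id := Multiset.map_congr rfl fun z hz =>
              Complex.ext rfl (by simp [him z hz])
          _ = Q.roots := Multiset.map_id _
      have h2 : (Q.roots.map Complex.re).count x = Q.roots.count ((x : ℂ)) := by
        conv_rhs => rw [← h1]
        rw [Multiset.count_map_eq_count' _ _ Complex.ofReal_injective]
      rw [h2, count_roots, count_roots, hQdef]
      exact (eq_rootMultiplicity_map hfinj x).symm
    have hle : Q.roots.map Complex.re ≤ q.roots :=
      Multiset.le_iff_count.2 fun x => le_of_eq (hcount x)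
    have hge : n ≤ q.roots.card := by
      have hcc := Multiset.card_le_card hle
      rwa [Multiset.card_map, hQcard] at hcc
    rw [hqdeg]
    exact le_antisymm (hqdeg ▸ card_roots' q) hge
  refine ⟨hcardq, ?_, ?_⟩
  -- Part 2
  · intro x hx
    by_contra hxy
    push_neg at hxy
    have hxr : ∀ r ∈ s, x ≠ r := fun r hr => ne_of_lt (lt_of_le_of_lt hxy (hylt r hr))
    have hpx := hevalne hxr
    have h0 : q.eval x = 0 := (mem_roots hq0).1 hx
    have heq : q.eval x = p.eval x * (1 + t * (s.map fun r => (r - x)⁻¹).sum) := by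
      rw [hq, eval_sub, eval_mul, eval_C, hd1 hxr, hflip x]
      ring
    rw [heq] at h0
    have hsum0 : 0 ≤ (s.map fun r => (r - x)⁻¹).sum := by
      refine Multiset.sum_nonneg fun w hw => ?_
      obtain ⟨a, ha, rfl⟩ := Multiset.mem_map.1 hw
      exact le_of_lt (inv_pos.2 (sub_pos.2 (lt_of_le_of_lt hxy (hylt a ha))))
    have hpos : 0 < 1 + t * (s.map fun r => (r - x)⁻¹).sum := by nlinarith
    rcases mul_eq_zero.1 h0 with h | h
    · exact hpx h
    · linarith
  -- Part 3
  · have hqy : q.eval y = p.eval y * (1 + t * (s.map fun r => (r - y)⁻¹).sum) := by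
      rw [hq, eval_sub, eval_mul, eval_C, hd1 hyne, hflip y]
      ring
    have hq'y : q.derivative.eval y =
        -(p.eval y * ((s.map fun r => (r - y)⁻¹).sum +
          t * (((s.map fun r => (r - y)⁻¹).sum) ^ 2 -
            (s.map fun r => ((r - y)⁻¹) ^ 2).sum))) := by
      rw [hq, derivative_sub, derivative_C_mul, eval_sub, eval_mul, eval_C,
        hd1 hyne, hd2 hyne, hflip y, hflip2 y]
      ring
    rw [hqy, hq'y, hPhib, neg_neg, mul_div_mul_left _ _ hpy]
    set SA := (s.map fun r => (r - y)⁻¹).sum with hSA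
    set SC := (s.map fun r => (r - b)⁻¹).sum with hSCdef
    set SA2 := (s.map fun r => ((r - y)⁻¹) ^ 2).sum with hSA2
    have hSApos : 0 ≤ SA := by
      rw [hSA]
      refine Multiset.sum_nonneg fun w hw => ?_
      obtain ⟨a, ha, rfl⟩ := Multiset.mem_map.1 hw
      exact le_of_lt (inv_pos.2 (sub_pos.2 (hylt a ha)))
    have hSA2pos : 0 ≤ SA2 := by
      rw [hSA2]
      refine Multiset.sum_nonneg fun w hw => ?_
      obtain ⟨a, ha, rfl⟩ := Multiset.mem_map.1 hw
      positivity
    have hD2 : 0 < 1 + t * SA := by nlinarith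
    rw [div_le_iff₀ hD2]
    have hcheb : (s.map fun r => (r - y)⁻¹ * (r - b)⁻¹).sum * SA ≤ SC * SA2 := by
      rw [hSA, hSCdef, hSA2]
      exact multiset_cheb s (fun r => (r - y)⁻¹) (fun r => (r - b)⁻¹)
        (fun i hi j hj => pairwise_ineq hby (hylt i hi) (hylt j hj))
    set SAC := (s.map fun r => (r - y)⁻¹ * (r - b)⁻¹).sum with hSACdef
    have hSACpos : 0 ≤ SAC := by
      rw [hSACdef]
      refine Multiset.sum_nonneg fun w hw => ?_
      obtain ⟨a, ha, rfl⟩ := Multiset.mem_map.1 hw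
      have h1 := hylt a ha
      have h2 := hb a ha
      have : (0:ℝ) < a - y := by linarith
      have : (0:ℝ) < a - b := by linarith
      positivity
    have hAC_le : SAC ≤ SA2 := by
      rw [hSACdef, hSA2]
      refine Multiset.sum_map_le_sum_map _ _ fun a ha => ?_
      have h1 : (0:ℝ) < a - y := sub_pos.2 (hylt a ha)
      have h2 : (0:ℝ) < a - b := sub_pos.2 (hb a ha)
      have h3 : (a - b)⁻¹ ≤ (a - y)⁻¹ := by
        apply inv_anti₀ h1
        linarith [hby]
      calc (a - y)⁻¹ * (a - b)⁻¹ ≤ (a - y)⁻¹ * (a - y)⁻¹ :=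
            mul_le_mul_of_nonneg_left h3 (le_of_lt (inv_pos.2 h1))
        _ = ((a - y)⁻¹) ^ 2 := (sq _).symm
    have hSAeq : SA = SC + δ * SAC := by
      rw [hSA, hSCdef, hSACdef]
      have hterm : ∀ a ∈ s, (a - y)⁻¹ = (a - b)⁻¹ + δ * ((a - y)⁻¹ * (a - b)⁻¹) := by
        intro a ha
        have h1 : a - y ≠ 0 := ne_of_gt (sub_pos.2 (hylt a ha))
        have h2 : a - b ≠ 0 := ne_of_gt (sub_pos.2 (hb a ha))
        have hyb : y - b = δ := by rw [hy]; ring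
        field_simp
        nlinarith [hyb]
      rw [Multiset.map_congr rfl hterm, Multiset.sum_map_add, Multiset.sum_map_mul_left]
    have h7 : SAC * (1 + t * SA) ≤ (1 + t * α) * SA2 := by
      have h5 : t * (SAC * SA) ≤ t * (SC * SA2) := mul_le_mul_of_nonneg_left hcheb ht.le
      have h6 : t * (SC * SA2) ≤ t * (α * SA2) :=
        mul_le_mul_of_nonneg_left (mul_le_mul_of_nonneg_right hSC hSA2pos) ht.le
      nlinarith [hAC_le, h5, h6]
    have h8 : δ * (SAC * (1 + t * SA)) ≤ t * SA2 := by
      rw [hδ, div_mul_eq_mul_div, div_le_iff₀ hD]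
      nlinarith [mul_le_mul_of_nonneg_left h7 ht.le]
    nlinarith [h8, hSAeq, hD2]
end

section
/- Let S_1,…,S_m be finite sets and {f_{s_1,…,s_m}} an interlacing family of real-rooted degree-n polynomials with positive leading coefficients. Then for every index 1 ≤ j ≤ n there exist assignments (a_1,…,a_m) and (b_1,…,b_m) in S_1×…×S_m such that λ_j(f_{a_1,…,a_m}) ≥ λ_j(f_∅) ≥ λ_j(f_{b_1,…,b_m}). -/
open Polynomial BigOperators Finset

open scoped Classical

/-!
Let `p_u = c_u ∏ (X - δ_u k)` (`c_u > 0`) have `N + 1` real roots, all interlaced by the roots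
`γ_0 ≥ ⋯ ≥ γ_{N-1}` of a common `g`. At `γ_j` every `p_u` has the weak sign `(-1)^(j+1)`, hence
so has `F = ∑ p_u`. If `F` vanishes at no `γ_j`, its signs at `B > γ_0 ≥ ⋯ ≥ γ_{N-1} > -B`
alternate strictly and give `N + 1` roots, one in each gap, so `F` is real-rooted and interlaced
by `γ`. If `F(γ_j) = 0`, then `γ_j` is a root of every `p_u`; it is divided out and one inducts
on `N`, reading interlacing through the counting functions `y ↦ #{roots ≥ y}`, which simply
shift by one under adding a common root. Comparing signs at a point strictly between the `j`-th
root of `F` and all the `j`-th roots of the `p_u` then shows that the `j`-th root of `F` lies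
between the smallest and the largest of them. Applied level by level to the partial sums of
the family, from full assignments down to `f_∅`, this gives the theorem.
-/

/-- `Interlaces n g f`: both are real-rooted with positive leading coefficients,
`g` of degree `n`, `f` of degree `n+1`, and the (decreasingly ordered) roots of `g`
interlace those of `f`. -/
def Interlaces (n : ℕ) (g f : Polynomial ℝ) : Prop :=
  ∃ (cg cf : ℝ) (γ : Fin n → ℝ) (β : Fin (n + 1) → ℝ),
    0 < cg ∧ 0 < cf ∧ Antitone γ ∧ Antitone β ∧
    g = C cg * ∏ j, (X - C (γ j)) ∧
    f = C cf * ∏ j, (X - C (β j)) ∧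
    ∀ j : Fin n, γ j ≤ β j.castSucc ∧ β j.succ ≤ γ j

def Interlacing {N : ℕ} (γ : Fin N → ℝ) (x : Fin (N + 1) → ℝ) : Prop :=
  ∀ j, γ j ≤ x j.castSucc ∧ x j.succ ≤ γ j

namespace Interlacing

variable {N : ℕ} {γ : Fin N → ℝ} {x y : Fin (N + 1) → ℝ}

theorem antitone_right (h : Interlacing γ x) : Antitone x :=
  Fin.antitone_iff_succ_le.2 fun i => (h i).2.trans (h i).1

theorem antitone_left (h : Interlacing γ x) : Antitone γ := by
  cases N with
  | zero => exact fun i => i.elim0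
  | succ N =>
    refine Fin.antitone_iff_succ_le.2 fun i => ?_
    calc γ i.succ ≤ x i.succ.castSucc := (h _).1
      _ = x i.castSucc.succ := by rw [Fin.succ_castSucc]
      _ ≤ γ i.castSucc := (h _).2

theorem apply_le_apply_of_lt (hx : Interlacing γ x) (hy : Interlacing γ y) {j k : Fin (N + 1)}
    (hkj : k < j) : x j ≤ y k := by
  obtain ⟨i, rfl⟩ := Fin.exists_succ_eq.2 ((Fin.zero_le k).trans_lt hkj).ne'
  exact (hx i).2.trans ((hy i).1.trans (hy.antitone_right (Fin.le_castSucc_iff.2 hkj)))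

end Interlacing

section SignOfProduct

variable {ι : Type*} [Fintype ι] {r : ι → ℝ} {y : ℝ}

theorem neg_one_pow_card_mul_prod_sub (A : Finset ι) :
    (-1) ^ #A * ∏ k, (y - r k) = (∏ k ∈ A, (r k - y)) * ∏ k ∈ Aᶜ, (y - r k) := by
  rw [← prod_mul_prod_compl A, ← mul_assoc, ← prod_neg]
  simp only [neg_sub]

theorem neg_one_pow_card_mul_prod_sub_nonneg (A : Finset ι) (hA : ∀ k ∈ A, y ≤ r k)
    (hAc : ∀ k ∉ A, r k ≤ y) : 0 ≤ (-1) ^ #A * ∏ k, (y - r k) := by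
  rw [neg_one_pow_card_mul_prod_sub]
  exact mul_nonneg (prod_nonneg fun k hk => sub_nonneg.2 (hA k hk))
    (prod_nonneg fun k hk => sub_nonneg.2 (hAc k (mem_compl.1 hk)))

theorem neg_one_pow_card_mul_prod_sub_pos (A : Finset ι) (hA : ∀ k ∈ A, y < r k)
    (hAc : ∀ k ∉ A, r k < y) : 0 < (-1) ^ #A * ∏ k, (y - r k) := by
  rw [neg_one_pow_card_mul_prod_sub]
  exact mul_pos (prod_pos fun k hk => sub_pos.2 (hA k hk))
    (prod_pos fun k hk => sub_pos.2 (hAc k (mem_compl.1 hk)))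

end SignOfProduct

theorem Interlacing.neg_one_pow_mul_prod_sub_nonneg {N : ℕ} {γ : Fin N → ℝ}
    {x : Fin (N + 1) → ℝ} (h : Interlacing γ x) (j : Fin N) :
    0 ≤ (-1) ^ ((j : ℕ) + 1) * ∏ k, (γ j - x k) := by
  have := neg_one_pow_card_mul_prod_sub_nonneg (r := x) (y := γ j) (Iic j.castSucc)
    (fun k hk => (h j).1.trans (h.antitone_right (mem_Iic.1 hk)))
    (fun k hk => by
      rw [mem_Iic, not_le, Fin.castSucc_lt_iff_succ_le] at hk
      exact (h.antitone_right hk).trans (h j).2)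
  rwa [Fin.card_Iic, Fin.val_castSucc] at this

theorem exists_antitone_map_eq {K : ℕ} (s : Multiset ℝ) (hs : Multiset.card s = K) :
    ∃ x : Fin K → ℝ, Antitone x ∧ univ.val.map x = s := by
  subst hs
  set l := s.sort (· ≥ ·)
  have hl : l.length = Multiset.card s := Multiset.length_sort _
  refine ⟨fun k => l.get (k.cast hl.symm), ?_, ?_⟩
  · intro i j hij
    exact (Multiset.pairwise_sort s _).sortedGE.antitone_get hij
  · rw [Fin.univ_val_map, ← List.ofFn_congr hl l.get, List.ofFn_get, Multiset.sort_eq]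

theorem exists_antitone_map_eq_cons {K : ℕ} (x : Fin (K + 1) → ℝ) (k : Fin (K + 1)) :
    ∃ x' : Fin K → ℝ, Antitone x' ∧ univ.val.map x = x k ::ₘ univ.val.map x' := by
  have hk : x k ∈ univ.val.map x := Multiset.mem_map_of_mem _ (mem_univ k)
  obtain ⟨x', hx', hxx'⟩ := exists_antitone_map_eq (K := K)
    ((univ.val.map x).erase (x k)) (by rw [Multiset.card_erase_of_mem hk]; simp)
  exact ⟨x', hx', by rw [hxx', Multiset.cons_erase hk]⟩

theorem prod_X_sub_C_eq_multiset_prod {R : Type*} [CommRing R] {K : ℕ} (x : Fin K → R) :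
    ∏ j, (X - C (x j)) = ((univ.val.map x).map fun a => X - C a).prod := by
  rw [Multiset.map_map]
  rfl

theorem prod_X_sub_C_eq_mul_of_map_eq_cons {K : ℕ} {x : Fin (K + 1) → ℝ} {x' : Fin K → ℝ}
    {a : ℝ} (h : univ.val.map x = a ::ₘ univ.val.map x') :
    ∏ j, (X - C (x j)) = (X - C a) * ∏ j, (X - C (x' j)) := by
  rw [prod_X_sub_C_eq_multiset_prod, prod_X_sub_C_eq_multiset_prod, h, Multiset.map_cons,
    Multiset.prod_cons]

theorem antitone_eq_of_C_mul_prod_X_sub_C_eq {K : ℕ} {a b : Fin K → ℝ} (ha : Antitone a)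
    (hb : Antitone b) {ca cb : ℝ} (hca : ca ≠ 0) (hcb : cb ≠ 0)
    (h : C ca * ∏ j, (X - C (a j)) = C cb * ∏ j, (X - C (b j))) : a = b := by
  have hroots := congrArg roots h
  rw [roots_C_mul _ hca, roots_C_mul _ hcb, prod_X_sub_C_eq_multiset_prod,
    prod_X_sub_C_eq_multiset_prod, roots_multiset_prod_X_sub_C, roots_multiset_prod_X_sub_C,
    Fin.univ_val_map, Fin.univ_val_map, Multiset.coe_eq_coe] at hroots
  exact List.ofFn_injective (hroots.eq_of_sortedGE ha.sortedGE_ofFn hb.sortedGE_ofFn)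

/-- Interlacing seen through the counting functions `y ↦ #{roots ≥ y}`: in this form it does not
see a root common to both sides. -/
def CountInterlacing (t s : Multiset ℝ) : Prop :=
  ∀ y, t.countP (y ≤ ·) ≤ s.countP (y ≤ ·) ∧ s.countP (y ≤ ·) ≤ t.countP (y ≤ ·) + 1

theorem countInterlacing_cons_iff {t s : Multiset ℝ} (a : ℝ) :
    CountInterlacing (a ::ₘ t) (a ::ₘ s) ↔ CountInterlacing t s := by
  simp only [CountInterlacing, Multiset.countP_cons]
  refine forall_congr' fun y => ?_
  split_ifs <;> omega

theorem countP_map_univ_val {K : ℕ} (x : Fin K → ℝ) (p : ℝ → Prop) [DecidablePred p] :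
    (univ.val.map x).countP p = #{k | p (x k)} := by
  rw [Multiset.countP_map]
  rfl

theorem Antitone.lt_card_filter_le_iff {K : ℕ} {x : Fin K → ℝ} (hx : Antitone x) (y : ℝ)
    (j : Fin K) : (j : ℕ) < #{k | y ≤ x k} ↔ y ≤ x j := by
  constructor
  · intro hj
    by_contra hxj
    have hsub : ({k | y ≤ x k} : Finset (Fin K)) ⊆ Iio j := fun k hk => by
      simp only [mem_filter, mem_univ, true_and] at hk
      exact mem_Iio.2 (lt_of_not_ge fun hjk => hxj (hk.trans (hx hjk)))
    exact (card_le_card hsub).not_gt (by rwa [Fin.card_Iio])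
  · intro hj
    have hsub : Iic j ⊆ ({k | y ≤ x k} : Finset (Fin K)) := fun k hk => by
      simp only [mem_filter, mem_univ, true_and]
      exact hj.trans (hx (mem_Iic.1 hk))
    exact (Fin.card_Iic j ▸ card_le_card hsub : (j : ℕ) + 1 ≤ _)

namespace Interlacing

variable {N : ℕ} {γ : Fin N → ℝ} {x : Fin (N + 1) → ℝ}

theorem countInterlacing (h : Interlacing γ x) :
    CountInterlacing (univ.val.map γ) (univ.val.map x) := by
  intro y
  simp only [countP_map_univ_val]
  constructor
  · refine card_le_card_of_injOn Fin.castSucc (fun j hj => ?_) (Fin.castSucc_injective N).injOn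
    simp only [coe_filter, Set.mem_ofPred_eq, mem_univ, true_and] at hj ⊢
    exact hj.trans (h j).1
  · have hsub : ({k | y ≤ x k} : Finset (Fin (N + 1))) ⊆
        insert 0 (({j | y ≤ γ j} : Finset (Fin N)).map (Fin.succEmb N)) := by
      intro k hk
      simp only [mem_filter, mem_univ, true_and] at hk
      cases k using Fin.cases with
      | zero => exact mem_insert_self _ _
      | succ i =>
        refine mem_insert_of_mem (mem_map_of_mem _ ?_)
        simp only [mem_filter, mem_univ, true_and]
        exact hk.trans (h i).2
    exact (card_le_card hsub).trans ((card_insert_le _ _).trans (by rw [card_map]))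

theorem of_countInterlacing (hγ : Antitone γ) (hx : Antitone x)
    (h : CountInterlacing (univ.val.map γ) (univ.val.map x)) : Interlacing γ x := by
  intro j
  constructor
  · have hj := (hγ.lt_card_filter_le_iff (γ j) j).2 le_rfl
    have := (h (γ j)).1
    rw [countP_map_univ_val, countP_map_univ_val] at this
    exact (hx.lt_card_filter_le_iff (γ j) j.castSucc).1 (hj.trans_le this)
  · have hj := (hx.lt_card_filter_le_iff (x j.succ) j.succ).2 le_rfl
    have := (h (x j.succ)).2
    rw [countP_map_univ_val, countP_map_univ_val, Fin.val_succ] at *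
    exact (hγ.lt_card_filter_le_iff (x j.succ) j).1 (by omega)

end Interlacing

theorem interlacing_iff_of_map_eq_cons {N : ℕ} {γ : Fin (N + 1) → ℝ} {x : Fin (N + 2) → ℝ}
    {γ' : Fin N → ℝ} {x' : Fin (N + 1) → ℝ} {a : ℝ} (hγ : Antitone γ) (hx : Antitone x)
    (hγ' : Antitone γ') (hx' : Antitone x') (hγa : univ.val.map γ = a ::ₘ univ.val.map γ')
    (hxa : univ.val.map x = a ::ₘ univ.val.map x') :
    Interlacing γ x ↔ Interlacing γ' x' := by
  refine ⟨fun h => .of_countInterlacing hγ' hx' ?_, fun h => .of_countInterlacing hγ hx ?_⟩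
  · rw [← countInterlacing_cons_iff a, ← hγa, ← hxa]
    exact h.countInterlacing
  · rw [hγa, hxa, countInterlacing_cons_iff]
    exact h.countInterlacing

theorem eq_C_coeff_mul_prod_X_sub_C_of_isRoot {R : Type*} [CommRing R] [IsDomain R] {F : R[X]}
    {K : ℕ} (hdeg : F.natDegree ≤ K) {r : Fin K → R} (hr : Function.Injective r)
    (hroot : ∀ k, F.IsRoot (r k)) : F = C (F.coeff K) * ∏ k, (X - C (r k)) := by
  rcases eq_or_ne F 0 with rfl | hF
  · simp
  have hle : univ.val.map r ≤ F.roots :=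
    (Multiset.le_iff_subset (univ.nodup.map hr)).2 fun a ha => by
      obtain ⟨k, -, rfl⟩ := Multiset.mem_map.1 ha
      exact (mem_roots hF).2 (hroot k)
  have hroots : univ.val.map r = F.roots := Multiset.eq_of_le_of_card_le hle (by
    simpa using (card_roots' F).trans hdeg)
  have hK : F.natDegree = K := le_antisymm hdeg (by simpa [← hroots] using card_roots' F)
  have hF := C_leadingCoeff_mul_prod_multiset_X_sub_C (p := F) (by rw [← hroots]; simp [hK])
  rwa [leadingCoeff, hK, ← hroots, ← prod_X_sub_C_eq_multiset_prod, eq_comm] at hF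

theorem exists_isRoot_mem_Ioo_of_neg_one_pow {p : ℝ[X]} {a b : ℝ} (hab : a ≤ b) (j : ℕ)
    (ha : 0 < (-1) ^ (j + 1) * p.eval a) (hb : 0 < (-1) ^ j * p.eval b) :
    ∃ r ∈ Set.Ioo a b, p.IsRoot r := by
  have hcont : ContinuousOn (p.eval ·) (Set.Icc a b) := p.continuous.continuousOn
  rcases neg_one_pow_eq_or ℝ j with h | h <;> rw [pow_succ, h] at ha <;> rw [h] at hb
  · exact intermediate_value_Ioo hab hcont (show (0 : ℝ) ∈ _ from ⟨by linarith, by linarith⟩)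
  · exact intermediate_value_Ioo' hab hcont (show (0 : ℝ) ∈ _ from ⟨by linarith, by linarith⟩)

section WeightedSum

variable {ι : Type*} [Fintype ι] {c : ι → ℝ}

theorem eval_sum_C_mul_prod {K : ℕ} (c : ι → ℝ) (δ : ι → Fin K → ℝ) (y : ℝ) :
    (∑ u, C (c u) * ∏ k, (X - C (δ u k))).eval y = ∑ u, c u * ∏ k, (y - δ u k) := by
  simp [eval_finsetSum, eval_prod]

theorem natDegree_sum_C_mul_prod_le {K : ℕ} (c : ι → ℝ) (δ : ι → Fin K → ℝ) :
    (∑ u, C (c u) * ∏ k, (X - C (δ u k))).natDegree ≤ K :=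
  natDegree_sum_le_of_forall_le _ _ fun u _ => (natDegree_C_mul_le _ _).trans (by simp)

theorem coeff_sum_C_mul_prod {K : ℕ} (c : ι → ℝ) (δ : ι → Fin K → ℝ) :
    (∑ u, C (c u) * ∏ k, (X - C (δ u k))).coeff K = ∑ u, c u := by
  rw [finsetSum_coeff]
  refine sum_congr rfl fun u _ => ?_
  have hlead := (monic_prod_X_sub_C (δ u) univ).coeff_natDegree
  rw [natDegree_finsetProd_X_sub_C_eq_card, card_univ, Fintype.card_fin] at hlead
  rw [coeff_C_mul, hlead, mul_one]

theorem neg_one_pow_card_mul_eval_sum_pos [Nonempty ι] (hc : ∀ u, 0 < c u) {K : ℕ}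
    {δ : ι → Fin K → ℝ} {y : ℝ} (A : Finset (Fin K))
    (hA : ∀ u, (∀ k ∈ A, y < δ u k) ∧ ∀ k ∉ A, δ u k < y) :
    0 < (-1) ^ #A * (∑ u, C (c u) * ∏ k, (X - C (δ u k))).eval y := by
  rw [eval_sum_C_mul_prod, mul_sum]
  refine sum_pos (fun u _ => ?_) univ_nonempty
  rw [mul_left_comm]
  exact mul_pos (hc u) (neg_one_pow_card_mul_prod_sub_pos A (hA u).1 (hA u).2)

variable {N : ℕ} {δ : ι → Fin (N + 1) → ℝ} {γ : Fin N → ℝ}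

theorem neg_one_pow_mul_eval_sum_nonneg (hc : ∀ u, 0 ≤ c u)
    (hint : ∀ u, Interlacing γ (δ u)) (j : Fin N) :
    0 ≤ (-1) ^ ((j : ℕ) + 1) * (∑ u, C (c u) * ∏ k, (X - C (δ u k))).eval (γ j) := by
  rw [eval_sum_C_mul_prod, mul_sum]
  exact sum_nonneg fun u _ => by
    rw [mul_left_comm]
    exact mul_nonneg (hc u) ((hint u).neg_one_pow_mul_prod_sub_nonneg j)

theorem exists_eq_of_eval_sum_eq_zero (hc : ∀ u, 0 < c u) (hint : ∀ u, Interlacing γ (δ u))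
    {j : Fin N} (h0 : (∑ u, C (c u) * ∏ k, (X - C (δ u k))).eval (γ j) = 0) (u : ι) :
    ∃ k, δ u k = γ j := by
  have hsum : ∑ u, c u * ((-1) ^ ((j : ℕ) + 1) * ∏ k, (γ j - δ u k)) = 0 := by
    simp_rw [mul_left_comm (c _), ← mul_sum, ← eval_sum_C_mul_prod, h0, mul_zero]
  have hu := (sum_eq_zero_iff_of_nonneg fun u _ => mul_nonneg (hc u).le
    ((hint u).neg_one_pow_mul_prod_sub_nonneg j)).1 hsum u (mem_univ u)
  simp only [mul_eq_zero, (hc u).ne', pow_eq_zero_iff', neg_eq_zero, one_ne_zero, false_and,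
    false_or, prod_eq_zero_iff, mem_univ, true_and, sub_eq_zero] at hu
  obtain ⟨k, hk⟩ := hu
  exact ⟨k, hk.symm⟩

theorem exists_roots_strictly_interlaced_of_eval_ne_zero [Nonempty ι] (hc : ∀ u, 0 < c u)
    (hint : ∀ u, Interlacing γ (δ u))
    (hne : ∀ j, (∑ u, C (c u) * ∏ k, (X - C (δ u k))).eval (γ j) ≠ 0) :
    ∃ x : Fin (N + 1) → ℝ, (∀ i, x i.succ < γ i ∧ γ i < x i.castSucc) ∧
      ∀ j, (∑ u, C (c u) * ∏ k, (X - C (δ u k))).IsRoot (x j) := by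
  set F := ∑ u, C (c u) * ∏ k, (X - C (δ u k))
  obtain ⟨u₀⟩ := ‹Nonempty ι›
  obtain ⟨M, hM⟩ := (Set.finite_range fun p : ι × Fin (N + 1) => |δ p.1 p.2|).bddAbove
  have hB (u : ι) (k : Fin (N + 1)) : |δ u k| < M + 1 :=
    (hM ⟨(u, k), rfl⟩).trans_lt (lt_add_one M)
  have hγ (j : Fin N) : 0 < (-1) ^ ((j : ℕ) + 1) * F.eval (γ j) :=
    (neg_one_pow_mul_eval_sum_nonneg (fun u => (hc u).le) hint j).lt_of_ne'
      (mul_ne_zero (pow_ne_zero _ (by norm_num)) (hne j))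
  -- the `j`-th root is found between `lo j ≤ hi j`, consecutive points of `M + 1, γ, -(M + 1)`
  set hi : Fin (N + 1) → ℝ := Fin.cons (M + 1) γ
  set lo : Fin (N + 1) → ℝ := Fin.snoc γ (-(M + 1))
  have hhi (j : Fin (N + 1)) : 0 < (-1) ^ (j : ℕ) * F.eval (hi j) := by
    cases j using Fin.cases with
    | zero => simpa [hi] using neg_one_pow_card_mul_eval_sum_pos hc ∅ fun u =>
        ⟨by simp, fun k _ => by linarith [le_abs_self (δ u k), hB u k]⟩
    | succ i => simpa [hi] using hγ i
  have hlo (j : Fin (N + 1)) : 0 < (-1) ^ ((j : ℕ) + 1) * F.eval (lo j) := by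
    cases j using Fin.lastCases with
    | last => simpa [lo] using neg_one_pow_card_mul_eval_sum_pos hc univ fun u =>
        ⟨fun k _ => by linarith [neg_abs_le (δ u k), hB u k], by simp⟩
    | cast i => simpa [lo] using hγ i
  have hlo_le (j : Fin (N + 1)) : lo j ≤ δ u₀ j := by
    cases j using Fin.lastCases with
    | last => simpa [lo] using (neg_abs_le _).trans' (neg_le_neg (hB u₀ (Fin.last N)).le)
    | cast i => simpa [lo] using (hint u₀ i).1
  have hle_hi (j : Fin (N + 1)) : δ u₀ j ≤ hi j := by
    cases j using Fin.cases with
    | zero => simpa [hi] using (le_abs_self _).trans (hB u₀ 0).le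
    | succ i => simpa [hi] using (hint u₀ i).2
  choose x hx hroot using fun j =>
    exists_isRoot_mem_Ioo_of_neg_one_pow ((hlo_le j).trans (hle_hi j)) j (hlo j) (hhi j)
  exact ⟨x, fun i => ⟨by simpa [hi] using (hx i.succ).2, by simpa [lo] using (hx i.castSucc).1⟩,
    hroot⟩

theorem exists_interlacing_sum_eq_of_eval_ne_zero [Nonempty ι] (hc : ∀ u, 0 < c u)
    (hint : ∀ u, Interlacing γ (δ u))
    (hne : ∀ j, (∑ u, C (c u) * ∏ k, (X - C (δ u k))).eval (γ j) ≠ 0) :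
    ∃ x, Interlacing γ x ∧
      ∑ u, C (c u) * ∏ k, (X - C (δ u k)) = C (∑ u, c u) * ∏ k, (X - C (x k)) := by
  obtain ⟨x, hlt, hroot⟩ := exists_roots_strictly_interlaced_of_eval_ne_zero hc hint hne
  have hx : StrictAnti x := Fin.strictAnti_iff_succ_lt.2 fun i => (hlt i).1.trans (hlt i).2
  refine ⟨x, fun i => ⟨(hlt i).2.le, (hlt i).1.le⟩, ?_⟩
  have hFx := eq_C_coeff_mul_prod_X_sub_C_of_isRoot (natDegree_sum_C_mul_prod_le c δ)
    hx.injective hroot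
  rwa [coeff_sum_C_mul_prod] at hFx

theorem exists_interlacing_sum_eq [Nonempty ι] (hc : ∀ u, 0 < c u) :
    ∀ {N : ℕ} (δ : ι → Fin (N + 1) → ℝ) (γ : Fin N → ℝ), (∀ u, Interlacing γ (δ u)) →
      ∃ x, Interlacing γ x ∧
        ∑ u, C (c u) * ∏ k, (X - C (δ u k)) = C (∑ u, c u) * ∏ k, (X - C (x k))
  | 0, _, _, hint => exists_interlacing_sum_eq_of_eval_ne_zero hc hint fun j => j.elim0
  | N + 1, δ, γ, hint => by
    by_cases hne : ∀ j, (∑ u, C (c u) * ∏ k, (X - C (δ u k))).eval (γ j) ≠ 0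
    · exact exists_interlacing_sum_eq_of_eval_ne_zero hc hint hne
    push Not at hne
    obtain ⟨j, hj⟩ := hne
    -- `γ j` is then a common root: split it off and use the induction hypothesis
    have hγ := (hint (Classical.arbitrary ι)).antitone_left
    choose kδ hkδ using exists_eq_of_eval_sum_eq_zero hc hint hj
    obtain ⟨γ', hγ', hγγ'⟩ := exists_antitone_map_eq_cons γ j
    choose δ' hδ' hδδ' using fun u => exists_antitone_map_eq_cons (δ u) (kδ u)
    simp only [hkδ] at hδδ'
    have hint' (u : ι) : Interlacing γ' (δ' u) :=
      (interlacing_iff_of_map_eq_cons hγ (hint u).antitone_right hγ' (hδ' u) hγγ'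
        (hδδ' u)).1 (hint u)
    obtain ⟨x', hx', hsum'⟩ := exists_interlacing_sum_eq hc δ' γ' hint'
    obtain ⟨x, hx, hxx'⟩ := exists_antitone_map_eq (K := N + 2) (γ j ::ₘ univ.val.map x')
      (by simp)
    refine ⟨x, (interlacing_iff_of_map_eq_cons hγ hx hγ' hx'.antitone_right hγγ' hxx').2 hx', ?_⟩
    calc ∑ u, C (c u) * ∏ k, (X - C (δ u k))
        = (X - C (γ j)) * ∑ u, C (c u) * ∏ k, (X - C (δ' u k)) := by
          rw [mul_sum]
          refine sum_congr rfl fun u _ => ?_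
          rw [prod_X_sub_C_eq_mul_of_map_eq_cons (hδδ' u)]
          ring
      _ = C (∑ u, c u) * ∏ k, (X - C (x k)) := by
          rw [hsum', prod_X_sub_C_eq_mul_of_map_eq_cons hxx']
          ring

theorem neg_one_pow_card_eq_of_sum_eq [Nonempty ι] (hc : ∀ u, 0 < c u) {K : ℕ}
    {δ : ι → Fin K → ℝ} {x : Fin K → ℝ}
    (hsum : ∑ u, C (c u) * ∏ k, (X - C (δ u k)) = C (∑ u, c u) * ∏ k, (X - C (x k)))
    {y : ℝ} {A B : Finset (Fin K)} (hA : ∀ u, (∀ k ∈ A, y < δ u k) ∧ ∀ k ∉ A, δ u k < y)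
    (hB : (∀ k ∈ B, y < x k) ∧ ∀ k ∉ B, x k < y) : (-1 : ℝ) ^ #A = (-1) ^ #B := by
  have hδ := neg_one_pow_card_mul_eval_sum_pos hc A hA
  have hx : 0 < (-1) ^ #B * ((∑ u, c u) * ∏ k, (y - x k)) := by
    rw [mul_left_comm]
    exact mul_pos (sum_pos (fun u _ => hc u) univ_nonempty)
      (neg_one_pow_card_mul_prod_sub_pos B hB.1 hB.2)
  simp only [hsum, eval_mul, eval_C, eval_prod, eval_sub, eval_X] at hδ
  rcases neg_one_pow_eq_or ℝ #A with h | h <;> rcases neg_one_pow_eq_or ℝ #B with h' | h' <;>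
    simp only [h, h'] at hδ hx ⊢ <;> linarith

theorem exists_le_and_exists_ge_of_sum_eq [Nonempty ι] (hc : ∀ u, 0 < c u)
    {x : Fin (N + 1) → ℝ} (hint : ∀ u, Interlacing γ (δ u)) (hx : Interlacing γ x)
    (hsum : ∑ u, C (c u) * ∏ k, (X - C (δ u k)) = C (∑ u, c u) * ∏ k, (X - C (x k)))
    (j : Fin (N + 1)) : (∃ u, x j ≤ δ u j) ∧ ∃ u, δ u j ≤ x j := by
  obtain ⟨u₀⟩ := ‹Nonempty ι›
  have hpow : (-1 : ℝ) ^ (j : ℕ) ≠ 0 := pow_ne_zero _ (by norm_num)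
  constructor
  · by_contra! h
    obtain ⟨v, -, hv⟩ := exists_max_image univ (fun u => δ u j) univ_nonempty
    have hparity := neg_one_pow_card_eq_of_sum_eq hc hsum (y := (δ v j + x j) / 2)
      (A := Iio j) (B := Iic j)
      (fun u => ⟨fun k hk => by linarith [hx.apply_le_apply_of_lt (hint u) (mem_Iio.1 hk), h v],
        fun k hk => by
          linarith [(hint u).antitone_right (not_lt.1 (mem_Iio.not.1 hk)), hv u (mem_univ u),
            h v]⟩)
      ⟨fun k hk => by linarith [hx.antitone_right (mem_Iic.1 hk), h v],
        fun k hk => by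
          linarith [hx.apply_le_apply_of_lt (hint u₀) (not_le.1 (mem_Iic.not.1 hk)), hv u₀ (mem_univ _),
            h v]⟩
    rw [Fin.card_Iio, Fin.card_Iic, pow_succ] at hparity
    exact hpow (by linarith)
  · by_contra! h
    obtain ⟨v, -, hv⟩ := exists_min_image univ (fun u => δ u j) univ_nonempty
    have hparity := neg_one_pow_card_eq_of_sum_eq hc hsum (y := (x j + δ v j) / 2)
      (A := Iic j) (B := Iio j)
      (fun u => ⟨fun k hk => by
          linarith [(hint u).antitone_right (mem_Iic.1 hk), hv u (mem_univ u), h v],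
        fun k hk => by linarith [(hint u).apply_le_apply_of_lt hx (not_le.1 (mem_Iic.not.1 hk)), h v]⟩)
      ⟨fun k hk => by linarith [(hint v).apply_le_apply_of_lt hx (mem_Iio.1 hk), h v],
        fun k hk => by linarith [hx.antitone_right (not_lt.1 (mem_Iio.not.1 hk)), h v]⟩
    rw [Fin.card_Iio, Fin.card_Iic, pow_succ] at hparity
    exact hpow (by linarith)

end WeightedSum
def HasRootsBetween {α : Type*} {n : ℕ} (β : α → Fin (n + 1) → ℝ) (P : ℝ[X]) : Prop :=
  ∃ (cP : ℝ) (γ : Fin (n + 1) → ℝ), 0 < cP ∧ Antitone γ ∧ P = C cP * ∏ j, (X - C (γ j)) ∧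
    ∀ j, ∃ a b, γ j ≤ β a j ∧ β b j ≤ γ j

theorem HasRootsBetween.sum {α ι : Type*} [Fintype ι] [Nonempty ι] {n : ℕ}
    {β : α → Fin (n + 1) → ℝ} {p : ι → ℝ[X]} {g : ℝ[X]} (hg : ∀ u, Interlaces n g (p u))
    (hp : ∀ u, HasRootsBetween β (p u)) : HasRootsBetween β (∑ u, p u) := by
  choose cg cf γ δ hcg hcf hγ hδ hgγ hpδ hint using hg
  choose cP x hcP hx hpx hxβ using hp
  obtain ⟨u₀⟩ := ‹Nonempty ι›
  have hγu : ∀ u, γ u = γ u₀ := fun u => antitone_eq_of_C_mul_prod_X_sub_C_eq (hγ u) (hγ u₀)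
    (hcg u).ne' (hcg u₀).ne' ((hgγ u).symm.trans (hgγ u₀))
  have hxδ : ∀ u, x u = δ u := fun u => antitone_eq_of_C_mul_prod_X_sub_C_eq (hx u) (hδ u)
    (hcP u).ne' (hcf u).ne' ((hpx u).symm.trans (hpδ u))
  have hint₀ : ∀ u, Interlacing (γ u₀) (δ u) := fun u => hγu u ▸ hint u
  obtain ⟨y, hy, hsum⟩ := exists_interlacing_sum_eq hcf δ (γ u₀) hint₀
  refine ⟨∑ u, cf u, y, sum_pos (fun u _ => hcf u) univ_nonempty, hy.antitone_right,
    (sum_congr rfl fun u _ => hpδ u).trans hsum, fun j => ?_⟩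
  obtain ⟨⟨u, hu⟩, ⟨v, hv⟩⟩ := exists_le_and_exists_ge_of_sum_eq hcf hint₀ hy hsum j
  obtain ⟨a, -, ha, -⟩ := hxβ u j
  obtain ⟨-, b, -, hb⟩ := hxβ v j
  rw [hxδ] at ha hb
  exact ⟨a, b, hu.trans ha, hb.trans hv⟩

section PrefixSum

variable {m : ℕ} {σT : Fin m → Type*} [∀ i, Fintype (σT i)]

/-- The paper's `f_{s_1,…,s_k}`. -/
noncomputable def prefixSum (f : (∀ i, σT i) → ℝ[X]) (k : ℕ) (s : ∀ i, σT i) : ℝ[X] :=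
  ∑ t ∈ univ.filter (fun t : ∀ i, σT i => ∀ i : Fin m, (i : ℕ) < k → t i = s i), f t

variable (f : (∀ i, σT i) → ℝ[X])

theorem prefixSum_zero (s : ∀ i, σT i) : prefixSum f 0 s = ∑ t, f t := by
  simp [prefixSum]

theorem prefixSum_of_le {k : ℕ} (hk : m ≤ k) (s : ∀ i, σT i) : prefixSum f k s = f s := by
  have hs : univ.filter (fun t : ∀ i, σT i => ∀ i : Fin m, (i : ℕ) < k → t i = s i) = {s} := by
    ext t
    simp only [mem_filter, mem_univ, true_and, mem_singleton]
    exact ⟨fun h => funext fun i => h i (i.2.trans_le hk), fun h i _ => h ▸ rfl⟩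
  rw [prefixSum, hs, sum_singleton]

theorem prefixSum_eq_sum_update (k : Fin m) (s : ∀ i, σT i) :
    prefixSum f k s = ∑ u : σT k, prefixSum f (k + 1) (Function.update s k u) := by
  rw [prefixSum, ← sum_fiberwise _ (fun t => t k)]
  refine sum_congr rfl fun u _ => sum_congr ?_ fun _ _ => rfl
  ext t
  simp only [mem_filter, mem_univ, true_and]
  constructor
  · rintro ⟨hlt, rfl⟩ i hi
    rcases Nat.lt_succ_iff_lt_or_eq.1 hi with hi | hi
    · rw [Function.update_of_ne (Fin.ne_of_val_ne hi.ne)]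
      exact hlt i hi
    · obtain rfl : i = k := Fin.ext hi
      rw [Function.update_self]
  · intro h
    refine ⟨fun i hi => ?_, by simpa using h k (Nat.lt_succ_self k)⟩
    simpa [Function.update_of_ne (Fin.ne_of_val_ne hi.ne)] using h i (Nat.lt_succ_of_lt hi)

end PrefixSum

/-- Interlacing families: if the real-rooted degree-`(n+1)` polynomials
`f_{s_1,…,s_m}` (with positive leading coefficients and decreasingly ordered roots
`β t`) form an interlacing family — i.e. for every partial assignment the polynomials
obtained by summing over all completions, as the next coordinate varies, have a
common interlacing — then the full sum `f_∅` is real-rooted and for every index `j`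
there are assignments `a`, `b` with `λ_j(f_a) ≥ λ_j(f_∅) ≥ λ_j(f_b)`. -/
theorem interlacing_family_root_bounds
    (m n : ℕ) (σT : Fin m → Type) [∀ i, Fintype (σT i)] [∀ i, Nonempty (σT i)]
    (f : (∀ i, σT i) → Polynomial ℝ)
    (c : (∀ i, σT i) → ℝ) (β : (∀ i, σT i) → Fin (n + 1) → ℝ)
    (hc : ∀ t, 0 < c t) (hβ : ∀ t, Antitone (β t))
    (hf : ∀ t, f t = C (c t) * ∏ j, (X - C (β t j)))
    (hfam : ∀ (k : Fin m) (s : ∀ i, σT i), ∃ g : Polynomial ℝ,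
      ∀ u : σT k,
        Interlaces n g
          (∑ t ∈ Finset.univ.filter
              (fun t : (∀ i, σT i) =>
                ∀ i : Fin m, (i : ℕ) < (k : ℕ) + 1 → t i = Function.update s k u i),
            f t)) :
    ∃ (cF : ℝ) (γ : Fin (n + 1) → ℝ), 0 < cF ∧ Antitone γ ∧
      (∑ t : ∀ i, σT i, f t) = C cF * ∏ j, (X - C (γ j)) ∧
      ∀ j : Fin (n + 1), ∃ a b : ∀ i, σT i, γ j ≤ β a j ∧ β b j ≤ γ j := by
  have hleaf (s : ∀ i, σT i) : HasRootsBetween β (prefixSum f m s) := by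
    rw [prefixSum_of_le f le_rfl]
    exact ⟨c s, β s, hc s, hβ s, hf s, fun j => ⟨s, s, le_rfl, le_rfl⟩⟩
  have hstep (k : ℕ) (hk : k < m) (ih : ∀ s, HasRootsBetween β (prefixSum f (k + 1) s))
      (s : ∀ i, σT i) : HasRootsBetween β (prefixSum f k s) := by
    obtain ⟨g, hg⟩ := hfam ⟨k, hk⟩ s
    rw [prefixSum_eq_sum_update f ⟨k, hk⟩]
    exact HasRootsBetween.sum hg fun u => ih _
  have hroot := Nat.decreasingInduction
    (motive := fun k _ => ∀ s, HasRootsBetween β (prefixSum f k s)) hstep hleaf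
    (Nat.zero_le m) fun _ => Classical.arbitrary _
  rwa [prefixSum_zero] at hroot
end

section
/- Let g(x) = ∏_{i=1}^{N} (1 - c_i ∂_x) x^k be applied to x^k, where c_i > 0 and k ≤ N. Then the smallest root of g satisfies λ_min(g) ≥ -(k-1)/α + Σ_{i=1}^{N} 1/(1/c_i + α) for every α > 0. -/
/-!
The argument is the lower-barrier method of Marcus–Spielman–Srivastava. For a real-rooted `p`
and `b` below its roots, put `Φ_p(b) = ∑ 1 / (a - b)` over the roots `a` of `p`, so that
`Φ_p = -p' / p`. Applying `1 - c ∂` with `c > 0` keeps `p` real-rooted: at a non-real `z`,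
`p(z) - c p'(z) = p(z) (1 - c ∑ 1 / (z - a))`, and the imaginary part of the sum is
`-Im z ∑ 1 / |z - a|² ≠ 0`. If `Φ_p(b) ≤ α`, then `b + δ` with `δ = 1 / (1 / c + α)` is still
below the roots of `q = p - c p'` and `Φ_q(b + δ) ≤ α`. The barrier `b = -k / α` starts with
`Φ = α` for `x ^ k`, moves right by `∑ 1 / (1 / c_i + α)`, and `Φ ≤ α` keeps every root at
least `1 / α` above it.
-/

open Polynomial BigOperators Finset

namespace Polynomial

section Field

variable {F : Type*} [Field F]

theorem eval_derivative_derivative_multiset_prod_X_sub_C (s : Multiset F) {x : F} (hx : x ∉ s) :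
    (derivative (derivative (s.map fun a => X - C a).prod)).eval x =
      (s.map fun a => X - C a).prod.eval x *
        ((s.map fun a => 1 / (x - a)).sum ^ 2 - (s.map fun a => (1 / (x - a)) ^ 2).sum) := by
  induction s using Multiset.induction with
  | empty => simp
  | cons a s ih =>
    have hxa : x - a ≠ 0 := sub_ne_zero.2 fun h => hx (h ▸ Multiset.mem_cons_self a s)
    have hxs : x ∉ s := fun h => hx (Multiset.mem_cons_of_mem h)
    set P := (s.map fun a => X - C a).prod with hP_def
    have hPx : P.eval x ≠ 0 := by
      simp [P, eval_multiset_prod, Multiset.prod_eq_zero_iff, sub_eq_zero, hxs]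
    have hP' : (derivative P).eval x = P.eval x * (s.map fun a => 1 / (x - a)).sum := by
      have hP : P.Splits := Splits.multisetProd (by simp [Splits.X_sub_C])
      rw [hP.eval_derivative_eq_eval_mul_sum hPx, hP_def, roots_multiset_prod_X_sub_C]
    have hd2 : derivative (derivative ((X - C a) * P)) =
        2 * derivative P + (X - C a) * derivative (derivative P) := by
      simp only [derivative_mul, derivative_add, derivative_sub, derivative_X, derivative_C,
        derivative_one, derivative_zero]
      ring
    rw [Multiset.map_cons, Multiset.prod_cons, hd2]
    simp only [Multiset.map_cons, Multiset.sum_cons, eval_add, eval_mul, eval_sub, eval_X,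
      eval_C, eval_ofNat, hP', ih hxs]
    field_simp
    ring

theorem Splits.eval_derivative_derivative_eq_eval_mul {f : F[X]} (hf : f.Splits) {x : F}
    (hx : f.eval x ≠ 0) :
    (derivative (derivative f)).eval x =
      f.eval x * ((f.roots.map fun z => 1 / (x - z)).sum ^ 2
        - (f.roots.map fun z => (1 / (x - z)) ^ 2).sum) := by
  have hroot : x ∉ f.roots := fun h => hx (isRoot_of_mem_roots h)
  conv_lhs => rw [hf.eq_prod_roots]
  conv_rhs => arg 1; rw [hf.eq_prod_roots]
  simp only [derivative_C_mul, eval_mul, eval_C,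
    eval_derivative_derivative_multiset_prod_X_sub_C _ hroot, mul_assoc]

end Field

theorem eval_ne_zero_of_forall_lt_roots {R : Type*} [CommRing R] [IsDomain R] [Preorder R]
    {p : R[X]} (hp0 : p ≠ 0) {x : R} (hx : ∀ a ∈ p.roots, x < a) : p.eval x ≠ 0 :=
  fun h => lt_irrefl x (hx x ((mem_roots hp0).2 h))

end Polynomial

theorem Complex.im_sum_one_div_sub_ofReal (s : Multiset ℝ) (z : ℂ) :
    (s.map fun a : ℝ => 1 / (z - a)).sum.im =
      -z.im * (s.map fun a : ℝ => 1 / normSq (z - a)).sum := by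
  induction s using Multiset.induction with
  | empty => simp
  | cons a s ih =>
    rw [Multiset.map_cons, Multiset.map_cons, Multiset.sum_cons, Multiset.sum_cons, add_im, ih]
    simp
    ring

theorem Complex.one_sub_ofReal_mul_sum_one_div_sub_ofReal_ne_zero (s : Multiset ℝ) (c : ℝ)
    {z : ℂ} (hz : z.im ≠ 0) : 1 - (c : ℂ) * (s.map fun a : ℝ => 1 / (z - a)).sum ≠ 0 := by
  intro h
  rcases Multiset.empty_or_exists_mem s with rfl | ⟨a, ha⟩
  · simp at h
  have hT : 0 < (s.map fun a : ℝ => 1 / normSq (z - a)).sum := by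
    refine lt_of_eq_of_lt (by simp) (Multiset.sum_lt_sum_of_nonempty (f := fun _ => (0 : ℝ))
      (fun h => by simp [h] at ha) fun b _ => ?_)
    refine one_div_pos.2 (normSq_pos.2 fun h => hz ?_)
    simpa using congrArg im h
  have him := congrArg im h
  rw [sub_im, one_im, im_ofReal_mul, im_sum_one_div_sub_ofReal, zero_im] at him
  rcases eq_or_ne c 0 with rfl | hc
  · simp at h
  · exact mul_ne_zero hc (mul_ne_zero (neg_ne_zero.2 hz) hT.ne') (by linarith)

theorem Multiset.sum_map_mul_sum_map_le_of_pairwise {ι R : Type*} [CommRing R] [LinearOrder R]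
    [IsStrictOrderedRing R] (s : Multiset ι) (f g h k : ι → R)
    (H : ∀ x ∈ s, ∀ y ∈ s, f x * g y + f y * g x ≤ h x * k y + h y * k x) :
    (s.map f).sum * (s.map g).sum ≤ (s.map h).sum * (s.map k).sum := by
  induction s using Multiset.induction with
  | empty => simp
  | cons a s ih =>
    have H' : ∀ x ∈ s, ∀ y ∈ s, f x * g y + f y * g x ≤ h x * k y + h y * k x :=
      fun x hx y hy => H x (Multiset.mem_cons_of_mem hx) y (Multiset.mem_cons_of_mem hy)
    have hdiag := H a (Multiset.mem_cons_self a s) a (Multiset.mem_cons_self a s)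
    have hcross : (s.map fun y => f a * g y + f y * g a).sum
        ≤ (s.map fun y => h a * k y + h y * k a).sum :=
      Multiset.sum_map_le_sum_map _ _ fun y hy =>
        H a (Multiset.mem_cons_self a s) y (Multiset.mem_cons_of_mem hy)
    simp only [Multiset.sum_map_add, Multiset.sum_map_mul_left, Multiset.sum_map_mul_right]
      at hcross
    simp only [Multiset.map_cons, Multiset.sum_cons]
    nlinarith [ih H']

namespace Polynomial

theorem Splits.sub_C_mul_derivative {p : ℝ[X]} (hp : p.Splits) (c : ℝ) :
    (p - C c * derivative p).Splits := by
  rcases eq_or_ne p 0 with rfl | hp0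
  · simp
  refine Splits.of_splits_map Complex.ofRealHom (IsAlgClosed.splits _) fun z hz => ?_
  set P := p.map Complex.ofRealHom
  have hPs : P.Splits := hp.map _
  have hroots : P.roots = p.roots.map Complex.ofRealHom := hp.roots_map _
  by_cases hPz : P.eval z = 0
  · have hzP : z ∈ P.roots := (mem_roots (map_ne_zero hp0)).2 hPz
    rw [hroots] at hzP
    obtain ⟨a, -, rfl⟩ := Multiset.mem_map.1 hzP
    exact ⟨a, rfl⟩
  by_contra hzR
  have hzim : z.im ≠ 0 := fun h => hzR ⟨z.re, Complex.ext (by simp) (by simp [h])⟩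
  have hq := (mem_roots'.1 hz).2.eq_zero
  rw [Polynomial.map_sub, Polynomial.map_mul, map_C, ← derivative_map, eval_sub, eval_mul,
    eval_C, hPs.eval_derivative_eq_eval_mul_sum hPz, hroots, Multiset.map_map] at hq
  refine mul_ne_zero hPz
    (Complex.one_sub_ofReal_mul_sum_one_div_sub_ofReal_ne_zero p.roots c hzim) ?_
  simpa [mul_sub, mul_left_comm] using hq

noncomputable def lowerBarrier (p : ℝ[X]) (b : ℝ) : ℝ :=
  (p.roots.map fun a => 1 / (a - b)).sum

structure IsLowerBarrier (p : ℝ[X]) (b α : ℝ) : Prop where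
  ne_zero : p ≠ 0
  splits : p.Splits
  lt_of_mem_roots : ∀ a ∈ p.roots, b < a
  lowerBarrier_le : lowerBarrier p b ≤ α

section LowerBarrier

variable {p : ℝ[X]}

theorem lowerBarrier_nonneg {b : ℝ} (hb : ∀ a ∈ p.roots, b < a) : 0 ≤ lowerBarrier p b :=
  Multiset.sum_nonneg fun _ hx => by
    obtain ⟨a, ha, rfl⟩ := Multiset.mem_map.1 hx
    exact one_div_nonneg.2 (sub_pos.2 (hb a ha)).le

theorem neg_lowerBarrier (p : ℝ[X]) (x : ℝ) :
    -lowerBarrier p x = (p.roots.map fun a => 1 / (x - a)).sum := by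
  rw [lowerBarrier, ← Multiset.sum_map_neg]
  exact congrArg _ (Multiset.map_congr rfl fun a _ => by rw [← div_neg, neg_sub])

theorem lowerBarrier_sub_lowerBarrier {b t : ℝ} (hb : ∀ a ∈ p.roots, b < a)
    (ht : ∀ a ∈ p.roots, t < a) :
    lowerBarrier p t - lowerBarrier p b =
      (t - b) * (p.roots.map fun a => 1 / (a - t) * (1 / (a - b))).sum := by
  rw [lowerBarrier, lowerBarrier, ← Multiset.sum_map_sub, ← Multiset.sum_map_mul_left]
  refine congrArg _ (Multiset.map_congr rfl fun a ha => ?_)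
  have hat : a - t ≠ 0 := (sub_pos.2 (ht a ha)).ne'
  have hab : a - b ≠ 0 := (sub_pos.2 (hb a ha)).ne'
  field_simp
  ring

/-- Weighted Chebyshev sum inequality: for the weights `1 / (a - t)`, the sequences `1 / (a - t)`
and `(a - t) / (a - b)` are oppositely ordered when `b ≤ t`. -/
theorem sum_mul_lowerBarrier_le {b t : ℝ} (hbt : b ≤ t) (ht : ∀ a ∈ p.roots, t < a) :
    (p.roots.map fun a => 1 / (a - t) * (1 / (a - b))).sum * lowerBarrier p t ≤
      (p.roots.map fun a => (1 / (a - t)) ^ 2).sum * lowerBarrier p b := by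
  refine Multiset.sum_map_mul_sum_map_le_of_pairwise _ _ _ _ _ fun x hx y hy => ?_
  have hxt : 0 < x - t := sub_pos.2 (ht x hx)
  have hyt : 0 < y - t := sub_pos.2 (ht y hy)
  have hxb : 0 < x - b := by linarith
  have hyb : 0 < y - b := by linarith
  have key : (1 / (x - t)) ^ 2 * (1 / (y - b)) + (1 / (y - t)) ^ 2 * (1 / (x - b)) -
      (1 / (x - t) * (1 / (x - b)) * (1 / (y - t)) + 1 / (y - t) * (1 / (y - b)) * (1 / (x - t)))
        = (t - b) * (x - y) ^ 2 / ((x - t) * (y - t)) ^ 2 / ((x - b) * (y - b)) := by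
    field_simp
    ring
  have : 0 ≤ (t - b) * (x - y) ^ 2 / ((x - t) * (y - t)) ^ 2 / ((x - b) * (y - b)) := by
    have := sub_nonneg.2 hbt
    positivity
  linarith

/-- The inequality `Φ_q(t) ≤ α` for `q = p - c p'` and `t = b + δ`, cleared of the positive
denominator `1 + c Φ_p(t)`. -/
theorem lowerBarrier_shift_le {b t c α : ℝ} (hbt : b ≤ t) (hc : 0 ≤ c)
    (hshift : (t - b) * (1 + c * α) = c) (ht : ∀ a ∈ p.roots, t < a)
    (hΦ : lowerBarrier p b ≤ α) :
    lowerBarrier p t +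
        c * (lowerBarrier p t ^ 2 - (p.roots.map fun a => (1 / (a - t)) ^ 2).sum) ≤
      α * (1 + c * lowerBarrier p t) := by
  have hb : ∀ a ∈ p.roots, b < a := fun a ha => hbt.trans_lt (ht a ha)
  set σ₁ := lowerBarrier p t
  set σ₂ := (p.roots.map fun a => (1 / (a - t)) ^ 2).sum
  set τ := (p.roots.map fun a => 1 / (a - t) * (1 / (a - b))).sum
  have hdiff : σ₁ - lowerBarrier p b = (t - b) * τ := lowerBarrier_sub_lowerBarrier hb ht
  have hcheb : τ * σ₁ ≤ σ₂ * lowerBarrier p b := sum_mul_lowerBarrier_le hbt ht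
  have hτσ₂ : τ ≤ σ₂ := Multiset.sum_map_le_sum_map _ _ fun a ha => by
    have hat := sub_pos.2 (ht a ha)
    rw [sq]
    exact mul_le_mul_of_nonneg_left (one_div_le_one_div_of_le hat (by linarith)) (by positivity)
  have hσ₂ : 0 ≤ σ₂ := Multiset.sum_nonneg fun _ hx => by
    obtain ⟨a, -, rfl⟩ := Multiset.mem_map.1 hx
    positivity
  have hδ : 0 ≤ t - b := sub_nonneg.2 hbt
  have h1 : (σ₁ - α) * (1 + c * σ₁) ≤ (t - b) * τ * (1 + c * σ₁) :=
    mul_le_mul_of_nonneg_right (by linarith) (by have := lowerBarrier_nonneg ht; positivity)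
  have h2 := mul_le_mul_of_nonneg_left hcheb (mul_nonneg hδ hc)
  have h3 := mul_le_mul_of_nonneg_left hτσ₂ hδ
  have h4 := mul_le_mul_of_nonneg_left hΦ (mul_nonneg (mul_nonneg hδ hc) hσ₂)
  linear_combination h1 + h2 + h3 + h4 + σ₂ * hshift

theorem Splits.eval_derivative_eq_neg_mul_lowerBarrier (hp : p.Splits) {x : ℝ}
    (hx : p.eval x ≠ 0) : (derivative p).eval x = -(p.eval x * lowerBarrier p x) := by
  rw [hp.eval_derivative_eq_eval_mul_sum hx, ← neg_lowerBarrier, mul_neg]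

theorem Splits.eval_sub_C_mul_derivative (hp : p.Splits) {x : ℝ} (hx : p.eval x ≠ 0) (c : ℝ) :
    (p - C c * derivative p).eval x = p.eval x * (1 + c * lowerBarrier p x) := by
  rw [eval_sub, eval_mul, eval_C, hp.eval_derivative_eq_neg_mul_lowerBarrier hx]
  ring

theorem Splits.eval_derivative_sub_C_mul_derivative (hp : p.Splits) {x : ℝ}
    (hx : p.eval x ≠ 0) (c : ℝ) :
    (derivative (p - C c * derivative p)).eval x = -(p.eval x * (lowerBarrier p x +
      c * (lowerBarrier p x ^ 2 - (p.roots.map fun a => (1 / (a - x)) ^ 2).sum))) := by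
  have hsq : (p.roots.map fun a => (1 / (x - a)) ^ 2).sum
      = (p.roots.map fun a => (1 / (a - x)) ^ 2).sum :=
    congrArg _ (Multiset.map_congr rfl fun a _ => by rw [← neg_sub a x, div_neg, neg_sq])
  rw [derivative_sub, derivative_C_mul, eval_sub, eval_mul, eval_C,
    hp.eval_derivative_eq_neg_mul_lowerBarrier hx, hp.eval_derivative_derivative_eq_eval_mul hx,
    hsq, ← neg_lowerBarrier]
  ring

theorem Splits.lowerBarrier_sub_C_mul_derivative_mul (hp : p.Splits) {x c : ℝ}
    (hx : p.eval x ≠ 0) (hq : (p - C c * derivative p).eval x ≠ 0) :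
    lowerBarrier (p - C c * derivative p) x * (1 + c * lowerBarrier p x) =
      lowerBarrier p x +
        c * (lowerBarrier p x ^ 2 - (p.roots.map fun a => (1 / (a - x)) ^ 2).sum) := by
  have hq' := (hp.sub_C_mul_derivative c).eval_derivative_eq_neg_mul_lowerBarrier hq
  rw [hp.eval_derivative_sub_C_mul_derivative hx, hp.eval_sub_C_mul_derivative hx] at hq'
  apply mul_left_cancel₀ hx
  linear_combination hq'

theorem Splits.eval_sub_C_mul_derivative_ne_zero (hp : p.Splits) (hp0 : p ≠ 0) {c x : ℝ}
    (hc : 0 ≤ c) (hx : ∀ a ∈ p.roots, x < a) : (p - C c * derivative p).eval x ≠ 0 := by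
  have hpx := eval_ne_zero_of_forall_lt_roots hp0 hx
  rw [hp.eval_sub_C_mul_derivative hpx]
  have := mul_nonneg hc (lowerBarrier_nonneg hx)
  exact mul_ne_zero hpx (by linarith)

theorem Splits.lt_of_mem_roots_sub_C_mul_derivative (hp : p.Splits) (hp0 : p ≠ 0) {c x μ : ℝ}
    (hc : 0 ≤ c) (hx : ∀ a ∈ p.roots, x < a) (hμ : μ ∈ (p - C c * derivative p).roots) :
    x < μ := by
  by_contra! hμx
  exact hp.eval_sub_C_mul_derivative_ne_zero hp0 hc (fun a ha => hμx.trans_lt (hx a ha))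
    (mem_roots'.1 hμ).2

namespace IsLowerBarrier

variable {b α : ℝ}

theorem one_div_sub_le (h : IsLowerBarrier p b α) {a : ℝ} (ha : a ∈ p.roots) :
    1 / (a - b) ≤ α :=
  le_trans (Multiset.single_le_sum (fun _ hx => by
      obtain ⟨a', ha', rfl⟩ := Multiset.mem_map.1 hx
      exact one_div_nonneg.2 (sub_pos.2 (h.lt_of_mem_roots a' ha')).le)
    _ (Multiset.mem_map_of_mem (fun a => 1 / (a - b)) ha)) h.lowerBarrier_le

theorem add_inv_le_of_mem_roots (h : IsLowerBarrier p b α) {a : ℝ} (ha : a ∈ p.roots) :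
    b + α⁻¹ ≤ a := by
  have hab : 0 < a - b := sub_pos.2 (h.lt_of_mem_roots a ha)
  have := inv_le_of_inv_le₀ hab (by simpa only [one_div] using h.one_div_sub_le ha)
  linarith

theorem sub_C_mul_derivative (h : IsLowerBarrier p b α) {c : ℝ} (hc : 0 < c) :
    IsLowerBarrier (p - C c * derivative p) (b + (c⁻¹ + α)⁻¹) α := by
  set t := b + (c⁻¹ + α)⁻¹
  have hα : 0 ≤ α := (lowerBarrier_nonneg h.lt_of_mem_roots).trans h.lowerBarrier_le
  have hδ : 0 < (c⁻¹ + α)⁻¹ := by positivity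
  have ht : ∀ a ∈ p.roots, t < a := fun a ha => by
    have hab : 0 < a - b := sub_pos.2 (h.lt_of_mem_roots a ha)
    have : 1 / (a - b) < c⁻¹ + α := (h.one_div_sub_le ha).trans_lt (by linarith [inv_pos.2 hc])
    have := (inv_lt_comm₀ (b := c⁻¹ + α) hab (by positivity)).1 (by rwa [one_div] at this)
    linarith
  have hpt := eval_ne_zero_of_forall_lt_roots h.ne_zero ht
  have hqt := h.splits.eval_sub_C_mul_derivative_ne_zero h.ne_zero hc.le ht
  refine ⟨fun hq => hqt (by rw [hq, eval_zero]), h.splits.sub_C_mul_derivative c,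
    fun μ hμ => h.splits.lt_of_mem_roots_sub_C_mul_derivative h.ne_zero hc.le ht hμ, ?_⟩
  have hshift : (t - b) * (1 + c * α) = c := by
    simp only [t, add_sub_cancel_left]
    field_simp
  have hle := lowerBarrier_shift_le (by linarith) hc.le hshift ht h.lowerBarrier_le
  rw [← h.splits.lowerBarrier_sub_C_mul_derivative_mul hpt hqt] at hle
  have hpos : 0 < 1 + c * lowerBarrier p t := by
    have := mul_nonneg hc.le (lowerBarrier_nonneg ht)
    linarith
  exact le_of_mul_le_mul_right hle hpos

theorem foldr_sub_C_mul_derivative (h : IsLowerBarrier p b α) (c : ℕ → ℝ) (L : List ℕ)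
    (hc : ∀ i ∈ L, 0 < c i) :
    IsLowerBarrier (L.foldr (fun i q => q - C (c i) * derivative q) p)
      (b + (L.map fun i => ((c i)⁻¹ + α)⁻¹).sum) α := by
  induction L with
  | nil => simpa using h
  | cons i L ih =>
    rw [List.foldr_cons, List.map_cons, List.sum_cons, add_comm _ (List.sum _), ← add_assoc]
    exact (ih fun j hj => hc j (List.mem_cons_of_mem i hj)).sub_C_mul_derivative
      (hc i List.mem_cons_self)

end IsLowerBarrier

end LowerBarrier

theorem isLowerBarrier_X_pow {α : ℝ} (hα : 0 < α) (k : ℕ) :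
    IsLowerBarrier (X ^ k) (-k / α) α := by
  refine ⟨pow_ne_zero _ X_ne_zero, Splits.X_pow k, fun a ha => ?_, ?_⟩
  · rw [roots_X_pow, Multiset.mem_nsmul] at ha
    rw [Multiset.mem_singleton.1 ha.2]
    have : (0 : ℝ) < k := Nat.cast_pos.2 (Nat.pos_of_ne_zero ha.1)
    rw [neg_div, neg_lt_zero]
    positivity
  · rcases Nat.eq_zero_or_pos k with rfl | hk
    · simpa [lowerBarrier] using hα.le
    · have : (k : ℝ) ≠ 0 := by positivity
      rw [lowerBarrier, roots_X_pow, Multiset.map_nsmul, Multiset.map_singleton,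
        Multiset.sum_nsmul, Multiset.sum_singleton, nsmul_eq_mul, zero_sub, neg_div, neg_neg,
        one_div_div, mul_div_cancel₀ _ this]

end Polynomial

theorem barrier_bound_smallest_root_general
    (N k : ℕ) (c : ℕ → ℝ) (hc : ∀ i, i < N → 0 < c i)
    (α : ℝ) (hα : 0 < α) :
    ∀ x ∈ ((List.range N).foldr
        (fun i q => q - C (c i) * derivative q) ((X : Polynomial ℝ) ^ k)).roots,
      -((k : ℝ) - 1) / α + ∑ i ∈ Finset.range N, 1 / ((c i)⁻¹ + α) ≤ x := by
  intro x hx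
  have h := (isLowerBarrier_X_pow hα k).foldr_sub_C_mul_derivative c (List.range N)
    fun i hi => hc i (List.mem_range.1 hi)
  have hsum : ((List.range N).map fun i => ((c i)⁻¹ + α)⁻¹).sum =
      ∑ i ∈ Finset.range N, 1 / ((c i)⁻¹ + α) := by
    simp only [one_div]
    rfl
  calc -((k : ℝ) - 1) / α + ∑ i ∈ Finset.range N, 1 / ((c i)⁻¹ + α)
      = -k / α + ((List.range N).map fun i => ((c i)⁻¹ + α)⁻¹).sum + α⁻¹ := by
        rw [hsum]
        field_simp
        ring
    _ ≤ x := h.add_inv_le_of_mem_roots hx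

/-- Barrier bound for the smallest root of `g = ∏_{i=1}^N (1 - c_i ∂_x) x^k`:
for every `α > 0`, every real root of `g` is at least
`-(k-1)/α + ∑_{i=1}^N 1/(1/c_i + α)`. -/
theorem barrier_bound_smallest_root
    (N k : ℕ) (hk : k ≤ N) (c : ℕ → ℝ) (hc : ∀ i, i < N → 0 < c i)
    (α : ℝ) (hα : 0 < α) :
    ∀ x ∈ ((List.range N).foldr
        (fun i q => q - C (c i) * derivative q) ((X : Polynomial ℝ) ^ k)).roots,
      -((k : ℝ) - 1) / α + ∑ i ∈ Finset.range N, 1 / ((c i)⁻¹ + α) ≤ x :=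
  barrier_bound_smallest_root_general N k c hc α hα
end

section
/- Let B = AAᵀ/c for A ∈ R^{n×m} and c > 0, and let r be a random vector taking value a_i (the i-th column of A) with probability p_i, where Σ p_i = 1 and E[r rᵀ] = B. Then for any symmetric C ∈ R^{n×n} and any ℓ ≥ 1, E det(xI - C - Σ_{i=1}^{ℓ} r_i r_iᵀ) = (1 - ∂_z)^{ℓ} det(xI - C + zB) |_{z=0}, where r_1,…,r_ℓ are i.i.d. copies of r. -/
/-!
Put `P(z) = M + z W` with `W = ∑ₜ qₜ uₜ vₜᵀ` and `∑ₜ qₜ = 1`. Expanding the determinant column by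
column, `∂_z det P = ∑ₜ qₜ vₜᵀ (cramer P uₜ)`, while the matrix determinant lemma gives
`det (P - uₜ vₜᵀ) = det P - vₜᵀ (cramer P uₜ)`. Hence
`(1 - ∂_z) det (M + z W) = ∑ₜ qₜ det (M - uₜ vₜᵀ + z W)`: one application of `1 - ∂_z` averages
over one more rank-one subtraction, and since `W` is unchanged the step can be iterated `ℓ` times.
Setting `z = 0` leaves the expectation over `ℓ` independent draws. For the theorem, take the
ground ring `ℝ[x]`, `M = xI - C` and `uₜ = vₜ` the columns of `A`, so that `W = B`.
-/

open Matrix Polynomial BigOperators Finset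

namespace Matrix
variable {n R : Type*} [Fintype n] [DecidableEq n] [CommRing R]

theorem det_one_add_vecMulVec (u v : n → R) : det (1 + vecMulVec u v) = 1 + v ⬝ᵥ u := by
  rw [vecMulVec_eq Unit, det_one_add_replicateCol_mul_replicateRow]

theorem det_updateCol_add_vecMulVec_self (M : Matrix n n R) (u w : n → R) (j : n) :
    det ((M + vecMulVec u w).updateCol j u) = det (M.updateCol j u) := by
  have h : (M + vecMulVec u w).updateCol j u
      = M.updateCol j u * (1 + vecMulVec (Pi.single j 1) (Function.update w j 0)) := by
    ext i k
    rcases eq_or_ne k j with rfl | hk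
    · simp [Matrix.mul_add, Matrix.mul_vecMulVec, vecMulVec_apply]
    · simp [Matrix.mul_add, Matrix.mul_vecMulVec, vecMulVec_apply, hk]
  rw [h, det_mul, det_one_add_vecMulVec]
  simp

theorem det_add_vecMulVec_s14 (M : Matrix n n R) (u v : n → R) :
    det (M + vecMulVec u v) = det M + v ⬝ᵥ cramer M u := by
  suffices ∀ s : Finset n, det (M + vecMulVec u fun j => if j ∈ s then v j else 0)
      = det M + ∑ j ∈ s, v j * cramer M u j by
    simpa [dotProduct] using this Finset.univ
  intro s
  induction s using Finset.induction_on with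
  | empty => simp [← Pi.zero_def]
  | insert a s ha ih =>
    set N := M + vecMulVec u fun j => if j ∈ s then v j else 0
    have hN : M + (vecMulVec u fun j => if j ∈ insert a s then v j else 0)
        = N.updateCol a ((fun i => N i a) + v a • u) := by
      ext i k
      rcases eq_or_ne k a with rfl | hk
      · simp [N, vecMulVec_apply, ha, mul_comm]
      · simp [N, vecMulVec_apply, hk]
    rw [hN, det_updateCol_add, det_updateCol_smul, updateCol_eq_self, ih,
      det_updateCol_add_vecMulVec_self, ← cramer_apply, Finset.sum_insert ha]
    ring

theorem derivative_det (M : Matrix n n R[X]) :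
    derivative (det M) = ∑ j, det (M.updateCol j fun i => derivative (M i j)) := by
  simp only [det_apply', map_sum]
  rw [Finset.sum_comm]
  refine Finset.sum_congr rfl fun σ _ => ?_
  rw [derivative_intCast_mul, derivative_prod_finset, Finset.mul_sum]
  refine Finset.sum_congr rfl fun j _ => ?_
  rw [← Finset.mul_prod_erase _ _ (Finset.mem_univ j), updateCol_self,
    Finset.prod_congr rfl fun i hi => updateCol_ne (Finset.ne_of_mem_erase hi)]
  ring

theorem det_sub_derivative_det {ι : Type*} [Fintype ι] (P : Matrix n n R[X]) (q : ι → R[X])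
    (u v : ι → n → R[X]) (hq : ∑ t, q t = 1)
    (hP : P.map derivative = ∑ t, q t • vecMulVec (u t) (v t)) :
    det P - derivative (det P) = ∑ t, q t * det (P - vecMulVec (u t) (v t)) := by
  have hcol : ∀ j, (fun i => derivative (P i j)) = ∑ t, (q t * v t j) • u t := by
    intro j
    funext i
    have := congr_fun (congr_fun hP i) j
    simp only [map_apply, Matrix.sum_apply, smul_apply, vecMulVec_apply, smul_eq_mul] at this
    simp only [this, Finset.sum_apply, Pi.smul_apply, smul_eq_mul]
    exact Finset.sum_congr rfl fun t _ => by ring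
  have hder : derivative (det P) = ∑ t, q t * v t ⬝ᵥ cramer P (u t) := by
    simp only [derivative_det, hcol, ← cramer_apply, map_sum, map_smul, Finset.sum_apply,
      Pi.smul_apply, smul_eq_mul, dotProduct, Finset.mul_sum]
    rw [Finset.sum_comm]
    exact Finset.sum_congr rfl fun t _ => Finset.sum_congr rfl fun j _ => by ring
  have hrank : ∀ t, det (P - vecMulVec (u t) (v t)) = det P - v t ⬝ᵥ cramer P (u t) := by
    intro t
    rw [sub_eq_add_neg, ← vecMulVec_neg, det_add_vecMulVec_s14, neg_dotProduct, ← sub_eq_add_neg]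
  simp only [hrank, mul_sub, Finset.sum_sub_distrib, ← Finset.sum_mul, hq, one_mul, hder]

end Matrix

namespace Polynomial
variable {R : Type*} [CommRing R]

theorem iterate_sub_derivative_sum_C_mul {ι : Type*} (ℓ : ℕ) (s : Finset ι) (a : ι → R)
    (f : ι → R[X]) :
    (fun g : R[X] => g - derivative g)^[ℓ] (∑ t ∈ s, C (a t) * f t)
      = ∑ t ∈ s, C (a t) * (fun g : R[X] => g - derivative g)^[ℓ] (f t) := by
  have h : (fun g : R[X] => g - derivative g) = ⇑(LinearMap.id - derivative : R[X] →ₗ[R] R[X]) :=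
    rfl
  simp only [h, ← Module.End.coe_pow, map_sum, C_mul', map_smul]

end Polynomial

theorem eval_zero_iterate_sub_derivative_det {n R ι : Type*} [Fintype n] [DecidableEq n]
    [CommRing R] [Fintype ι] (q : ι → R) (u v : ι → n → R) (hq : ∑ t, q t = 1) (ℓ : ℕ)
    (M : Matrix n n R) :
    eval 0 ((fun g : R[X] => g - derivative g)^[ℓ]
        (det (M.map C + (X : R[X]) • (∑ t, q t • vecMulVec (u t) (v t)).map C)))
      = ∑ s : Fin ℓ → ι, (∏ i, q (s i)) * det (M - ∑ i, vecMulVec (u (s i)) (v (s i))) := by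
  set W := ∑ t, q t • vecMulVec (u t) (v t)
  induction ℓ generalizing M with
  | zero =>
    rw [Function.iterate_zero_apply, eval_det_add_X_smul, ← RingHom.mapMatrix_apply,
      ← RingHom.map_det, eval_C]
    simp
  | succ ℓ ih =>
    have hstep : det (M.map C + (X : R[X]) • W.map C)
          - derivative (det (M.map C + (X : R[X]) • W.map C))
        = ∑ t, C (q t) * det ((M - vecMulVec (u t) (v t)).map C + (X : R[X]) • W.map C) := by
      rw [det_sub_derivative_det _ (C ∘ q) (fun t => C ∘ u t) (fun t => C ∘ v t)]
      · refine Finset.sum_congr rfl fun t _ => ?_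
        congr 2
        ext i j
        simp [vecMulVec_apply]
        ring
      · simp only [Function.comp_apply, ← map_sum, hq, C_1]
      · ext i j
        simp [W, vecMulVec_apply, Matrix.sum_apply]
    rw [Function.iterate_succ_apply, hstep, iterate_sub_derivative_sum_C_mul, eval_finsetSum]
    simp only [eval_mul, eval_C, ih]
    rw [← (Fin.consEquiv fun _ => ι).sum_comp, Fintype.sum_prod_type]
    refine Finset.sum_congr rfl fun t _ => ?_
    rw [Finset.mul_sum]
    refine Finset.sum_congr rfl fun s _ => ?_
    simp only [Fin.consEquiv_apply, Fin.prod_univ_succ, Fin.sum_univ_succ, Fin.cons_zero,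
      Fin.cons_succ, sub_sub]
    ring

theorem expected_charpoly_partial_assignment_general
    (n m ℓ : ℕ)
    (A : Matrix (Fin n) (Fin m) ℝ) (c : ℝ)
    (p : Fin m → ℝ) (hp1 : ∑ i, p i = 1)
    (hE : ∑ i, p i • Matrix.vecMulVec (fun j => A j i) (fun j => A j i)
        = c⁻¹ • (A * Aᵀ))
    (Cm : Matrix (Fin n) (Fin n) ℝ) :
    (∑ s : Fin ℓ → Fin m,
        C (∏ i, p (s i)) *
          (Cm + ∑ i, Matrix.vecMulVec (fun j => A j (s i)) (fun j => A j (s i))).charpoly)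
      =
      Polynomial.eval (0 : Polynomial ℝ)
        ((fun q : Polynomial (Polynomial ℝ) => q - Polynomial.derivative q)^[ℓ]
          (Matrix.det
            ((Polynomial.C (Polynomial.X : Polynomial ℝ)) •
                (1 : Matrix (Fin n) (Fin n) (Polynomial (Polynomial ℝ)))
              - Cm.map (fun a => Polynomial.C (Polynomial.C a))
              + (Polynomial.X : Polynomial (Polynomial ℝ)) •
                  ((c⁻¹ • (A * Aᵀ)).map (fun a => Polynomial.C (Polynomial.C a)))))) := by
  set a : Fin m → Fin n → ℝ[X] := fun t j => C (A j t)
  have hW : ∑ t, C (p t) • vecMulVec (a t) (a t) = (c⁻¹ • (A * Aᵀ)).map C := by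
    rw [← hE]
    ext i j
    simp [a, Matrix.sum_apply, vecMulVec_apply]
  have hP : (charmatrix Cm).map C + (X : ℝ[X][X]) • ((c⁻¹ • (A * Aᵀ)).map C).map C
      = C (X : ℝ[X]) • (1 : Matrix (Fin n) (Fin n) ℝ[X][X]) - Cm.map (fun x => C (C x))
        + (X : ℝ[X][X]) • (c⁻¹ • (A * Aᵀ)).map (fun x => C (C x)) := by
    ext i j
    by_cases hij : i = j <;> simp [hij]
  have hq : ∑ t, C (p t) = (1 : ℝ[X]) := by rw [← map_sum, hp1, C_1]
  have key := eval_zero_iterate_sub_derivative_det (fun t => C (p t)) a a hq ℓ (charmatrix Cm)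
  rw [← hP, ← hW, key]
  refine Finset.sum_congr rfl fun s _ => ?_
  rw [← map_prod, charpoly]
  congr 2
  ext i j
  by_cases hij : i = j <;> simp [hij, a, Matrix.sum_apply, vecMulVec_apply] <;> ring

/-- Partial-assignment polynomial formula: if `r_1,…,r_ℓ` are i.i.d. random vectors
taking value `a_i` (the `i`-th column of `A`) with probability `p_i` and
`E[r rᵀ] = B = A Aᵀ / c`, then for any symmetric `C`,
`E det(xI - C - ∑ r_i r_iᵀ) = (1 - ∂_z)^ℓ det(xI - C + zB)|_{z=0}`.
The bivariate polynomial `det(xI - C + zB)` is taken in `(ℝ[x])[z]`. -/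
theorem expected_charpoly_partial_assignment
    (n m ℓ : ℕ) (hℓ : 1 ≤ ℓ)
    (A : Matrix (Fin n) (Fin m) ℝ) (c : ℝ) (hc : 0 < c)
    (p : Fin m → ℝ) (hp : ∀ i, 0 ≤ p i) (hp1 : ∑ i, p i = 1)
    (hE : ∑ i, p i • Matrix.vecMulVec (fun j => A j i) (fun j => A j i)
        = c⁻¹ • (A * Aᵀ))
    (Cm : Matrix (Fin n) (Fin n) ℝ) (hC : Cm.IsSymm) :
    (∑ s : Fin ℓ → Fin m,
        C (∏ i, p (s i)) *
          (Cm + ∑ i, Matrix.vecMulVec (fun j => A j (s i)) (fun j => A j (s i))).charpoly)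
      =
      Polynomial.eval (0 : Polynomial ℝ)
        ((fun q : Polynomial (Polynomial ℝ) => q - Polynomial.derivative q)^[ℓ]
          (Matrix.det
            ((Polynomial.C (Polynomial.X : Polynomial ℝ)) •
                (1 : Matrix (Fin n) (Fin n) (Polynomial (Polynomial ℝ)))
              - Cm.map (fun a => Polynomial.C (Polynomial.C a))
              + (Polynomial.X : Polynomial (Polynomial ℝ)) •
                  ((c⁻¹ • (A * Aᵀ)).map (fun a => Polynomial.C (Polynomial.C a)))))) :=
  expected_charpoly_partial_assignment_general n m ℓ A c p hp1 hE Cm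
end

section
/- Let σ_1 ≥ … ≥ σ_N > 0, let F = Σ_{i=1}^N σ_i² and Q = Σ_{i=1}^N σ_i⁴, and let α, w > 0. Then Σ_{i=1}^{N} 1/(w σ_i^{-2} + α) ≥ (F²/Q) / ((F²/Q)·w/F + α), i.e., Σ_i 1/(w/σ_i² + α) ≥ srank₄/(srank₄·w/F + α) where srank₄ = F²/Q. -/
open Finset

/- Since `1 / (w σᵢ⁻² + α) = (σᵢ²)² / (w σᵢ² + α σᵢ⁴)`, the Engel form of Cauchy–Schwarz,
`(∑ fᵢ)² / ∑ gᵢ ≤ ∑ fᵢ² / gᵢ`, bounds the sum below by `F² / (w F + α Q)`; this is Jensen's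
inequality for the convex `x ↦ 1 / (w / F + α x)` with weights `σᵢ² / F`. Multiplying through
by `Q / F²` shows that `F² / (w F + α Q)` is exactly the claimed bound `r / (r w / F + α)`,
`r = F² / Q`. -/

theorem sq_sum_div_le_sum_one_div_mul_inv_add {ι R : Type*} [Field R] [LinearOrder R]
    [IsStrictOrderedRing R] (s : Finset ι) (x : ι → R) (hx : ∀ i ∈ s, 0 < x i)
    {w α : R} (hw : 0 < w) (hα : 0 ≤ α) :
    (∑ i ∈ s, x i) ^ 2 / (w * ∑ i ∈ s, x i + α * ∑ i ∈ s, x i ^ 2) ≤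
      ∑ i ∈ s, 1 / (w * (x i)⁻¹ + α) := by
  have hterm : ∀ i ∈ s, x i ^ 2 / (w * x i + α * x i ^ 2) = 1 / (w * (x i)⁻¹ + α) := by
    intro i hi
    have := hx i hi
    field_simp
  rw [mul_sum, mul_sum, ← sum_add_distrib, ← sum_congr rfl hterm]
  exact sq_sum_div_le_sum_sq_div s x fun i hi ↦ by have := hx i hi; positivity

theorem jensen_stable_rank_general
    (N : ℕ) (hN : 0 < N) (σ : ℕ → ℝ)
    (hpos : ∀ i, i < N → 0 < σ i)
    (α w : ℝ) (hα : 0 < α) (hw : 0 < w) :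
    ((∑ i ∈ Finset.range N, (σ i) ^ 2) ^ 2 / (∑ i ∈ Finset.range N, (σ i) ^ 4)) /
        (((∑ i ∈ Finset.range N, (σ i) ^ 2) ^ 2 /
              (∑ i ∈ Finset.range N, (σ i) ^ 4)) *
            w / (∑ i ∈ Finset.range N, (σ i) ^ 2) + α)
      ≤ ∑ i ∈ Finset.range N, 1 / (w * ((σ i) ^ 2)⁻¹ + α) := by
  have hσ : ∀ i ∈ range N, 0 < σ i := fun i hi ↦ hpos i (mem_range.mp hi)
  have hne : (range N).Nonempty := nonempty_range_iff.mpr hN.ne'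
  have hF : 0 < ∑ i ∈ range N, σ i ^ 2 :=
    sum_pos (fun i hi ↦ by have := hσ i hi; positivity) hne
  have hQ : 0 < ∑ i ∈ range N, σ i ^ 4 :=
    sum_pos (fun i hi ↦ by have := hσ i hi; positivity) hne
  calc _ = (∑ i ∈ range N, σ i ^ 2) ^ 2 /
        (w * ∑ i ∈ range N, σ i ^ 2 + α * ∑ i ∈ range N, (σ i ^ 2) ^ 2) := by
        simp only [← pow_mul]
        field_simp
    _ ≤ _ := sq_sum_div_le_sum_one_div_mul_inv_add _ _
        (fun i hi ↦ by have := hσ i hi; positivity) hw hα.le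

/-- Jensen step for the stable-rank bound: for `σ_1 ≥ … ≥ σ_N > 0`,
`F = ∑ σ_i²`, `Q = ∑ σ_i⁴` and `α, w > 0`,
`∑_i 1/(w σ_i⁻² + α) ≥ (F²/Q) / ((F²/Q)·w/F + α)`. -/
theorem jensen_stable_rank
    (N : ℕ) (hN : 0 < N) (σ : ℕ → ℝ)
    (hpos : ∀ i, i < N → 0 < σ i)
    (hmono : ∀ i j, i ≤ j → j < N → σ j ≤ σ i)
    (α w : ℝ) (hα : 0 < α) (hw : 0 < w) :
    ((∑ i ∈ Finset.range N, (σ i) ^ 2) ^ 2 / (∑ i ∈ Finset.range N, (σ i) ^ 4)) /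
        (((∑ i ∈ Finset.range N, (σ i) ^ 2) ^ 2 /
              (∑ i ∈ Finset.range N, (σ i) ^ 4)) *
            w / (∑ i ∈ Finset.range N, (σ i) ^ 2) + α)
      ≤ ∑ i ∈ Finset.range N, 1 / (w * ((σ i) ^ 2)⁻¹ + α) :=
  jensen_stable_rank_general N hN σ hpos α w hα hw
end
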